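/- arXiv:2402.04799 — 7 statements merged into one kernel-verified Lean document; each statement's English description precedes it below -/
import Mathlib

section
/- Let U ∈ ℝ^{d×n} be a frame, z ∈ ℝ^n a positive vector, and T ⊆ [n] a subset. For α > 0 let z(α) := z ∘ (1_{T^c} + α·1_T) denote the vector obtained from z by multiplying the coordinates in T by α. Then for each j ∈ T the function α ↦ lev^U_j(z(α)) is non-decreasing on (0,∞), and for each j ∉ T the function α ↦ lev^U_j(z(α)) is non-increasing on (0,∞). -/
open Matrix BigOperators

/-- Leverage scores: `lev^U_j(z) = z_j · u_jᵀ (U Z Uᵀ)⁻¹ u_j`. -/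
noncomputable def lev {d n : ℕ} (U : Matrix (Fin d) (Fin n) ℝ) (z : Fin n → ℝ)
    (j : Fin n) : ℝ :=
  z j * ((fun i => U i j) ⬝ᵥ ((U * Matrix.diagonal z * Uᵀ)⁻¹ *ᵥ fun i => U i j))

/-- `scale z T α = z ∘ (1_{Tᶜ} + α·1_T)`: multiply the coordinates of `z` in `T` by `α`. -/
def scale {n : ℕ} (z : Fin n → ℝ) (T : Finset (Fin n)) (α : ℝ) : Fin n → ℝ :=
  fun j => if j ∈ T then α * z j else z j

/-!
Leverage scores are invariant under `z ↦ c • z`, and scaling `T` up by `α` is, up to the factor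
`α`, scaling `Tᶜ` by `α⁻¹`; so it suffices to treat `j ∉ T`. There `z j` does not move while
`U Z Uᵀ` grows in the Loewner order, and `xᵀ M⁻¹ x` is antitone in `M` on positive definite
matrices: for `M ≤ N` and `y = N⁻¹ x`,
`xᵀ N⁻¹ x = 2 yᵀx - yᵀ N y ≤ 2 yᵀx - yᵀ M y ≤ xᵀ M⁻¹ x`,
the last step by completing the square.
-/

open scoped MatrixOrder

namespace Matrix

variable {m n : Type*} [Fintype m] [Fintype n]

theorem linearIndependent_row_of_rank_eq_card {R : Type*} [Field R] {M : Matrix m n R}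
    (h : M.rank = Fintype.card m) : LinearIndependent R M.row := by
  rw [linearIndependent_iff_card_eq_finrank_span, Set.finrank, ← rank_eq_finrank_span_row, h]

theorem IsHermitian.dotProduct_mulVec_comm {M : Matrix n n ℝ} (hM : M.IsHermitian)
    (x y : n → ℝ) : x ⬝ᵥ (M *ᵥ y) = y ⬝ᵥ (M *ᵥ x) := by
  rw [dotProduct_mulVec, ← mulVec_transpose, ← conjTranspose_eq_transpose_of_trivial, hM.eq,
    dotProduct_comm]

variable [DecidableEq n]

theorem inv_smul₀ {K : Type*} [Field K] (A : Matrix n n K) {c : K} (hc : c ≠ 0) :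
    (c • A)⁻¹ = c⁻¹ • A⁻¹ := by
  by_cases hA : IsUnit A.det
  · exact inv_smul' A (Units.mk0 c hc) hA
  · have hcA : ¬IsUnit (c • A).det := by simpa [det_smul, hc] using hA
    rw [nonsing_inv_apply_not_isUnit _ hA, nonsing_inv_apply_not_isUnit _ hcA, smul_zero]

namespace PosDef

variable {M N : Matrix n n ℝ}

theorem mulVec_inv_mulVec (hM : M.PosDef) (x : n → ℝ) : M *ᵥ (M⁻¹ *ᵥ x) = x := by
  rw [mulVec_mulVec, mul_nonsing_inv _ ((isUnit_iff_isUnit_det M).mp hM.isUnit), one_mulVec]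

theorem two_mul_dotProduct_sub_le (hM : M.PosDef) (x y : n → ℝ) :
    2 * (y ⬝ᵥ x) - y ⬝ᵥ (M *ᵥ y) ≤ x ⬝ᵥ (M⁻¹ *ᵥ x) := by
  have hsq := hM.posSemidef.dotProduct_mulVec_nonneg (y - M⁻¹ *ᵥ x)
  simp only [star_trivial, mulVec_sub, sub_dotProduct, dotProduct_sub, hM.mulVec_inv_mulVec,
    hM.isHermitian.dotProduct_mulVec_comm (M⁻¹ *ᵥ x) y, dotProduct_comm (M⁻¹ *ᵥ x) x] at hsq
  linarith

theorem dotProduct_inv_mulVec_le (hM : M.PosDef) (hN : N.PosDef) (hMN : M ≤ N) (x : n → ℝ) :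
    x ⬝ᵥ (N⁻¹ *ᵥ x) ≤ x ⬝ᵥ (M⁻¹ *ᵥ x) := by
  set y := N⁻¹ *ᵥ x
  have hquad : y ⬝ᵥ (M *ᵥ y) ≤ y ⬝ᵥ x := by
    have hNM := (le_iff.mp hMN).dotProduct_mulVec_nonneg y
    simp only [star_trivial, sub_mulVec, dotProduct_sub, show N *ᵥ y = x from
      hN.mulVec_inv_mulVec x] at hNM
    linarith
  have := hM.two_mul_dotProduct_sub_le x y
  rw [dotProduct_comm x y]
  linarith

end PosDef

theorem posSemidef_mul_diagonal_mul_transpose (U : Matrix m n ℝ) {w : n → ℝ} (hw : 0 ≤ w) :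
    (U * diagonal w * Uᵀ).PosSemidef := by
  simpa [conjTranspose_eq_transpose_of_trivial] using
    (PosSemidef.diagonal hw).mul_mul_conjTranspose_same U

theorem posDef_mul_diagonal_mul_transpose {U : Matrix m n ℝ} (hU : LinearIndependent ℝ U.row)
    {w : n → ℝ} (hw : ∀ j, 0 < w j) : (U * diagonal w * Uᵀ).PosDef := by
  simpa [conjTranspose_eq_transpose_of_trivial] using
    (PosDef.diagonal hw).mul_mul_conjTranspose_same (vecMul_injective_iff.mpr hU)

theorem mul_diagonal_mul_transpose_mono (U : Matrix m n ℝ) {w w' : n → ℝ} (hw : w ≤ w') :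
    U * diagonal w * Uᵀ ≤ U * diagonal w' * Uᵀ := by
  rw [le_iff, ← Matrix.sub_mul, ← Matrix.mul_sub, diagonal_sub]
  exact posSemidef_mul_diagonal_mul_transpose U (sub_nonneg.mpr hw)

end Matrix

section Leverage

variable {d n : ℕ}

theorem lev_smul (U : Matrix (Fin d) (Fin n) ℝ) (z : Fin n → ℝ) (j : Fin n) {c : ℝ}
    (hc : c ≠ 0) : lev U (c • z) j = lev U z j := by
  simp only [lev, Pi.smul_apply, diagonal_smul, Matrix.mul_smul, Matrix.smul_mul, inv_smul₀ _ hc,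
    smul_mulVec, dotProduct_smul, smul_eq_mul]
  field_simp

theorem lev_le_lev_of_le {U : Matrix (Fin d) (Fin n) ℝ} (hU : U.rank = d) {z z' : Fin n → ℝ}
    (hz : ∀ k, 0 < z k) (hzz' : z ≤ z') {j : Fin n} (hj : z' j = z j) :
    lev U z' j ≤ lev U z j := by
  have hrow : LinearIndependent ℝ U.row :=
    linearIndependent_row_of_rank_eq_card (by rw [hU, Fintype.card_fin])
  have hz' : ∀ k, 0 < z' k := fun k => (hz k).trans_le (hzz' k)
  rw [lev, lev, hj]
  exact mul_le_mul_of_nonneg_left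
    ((posDef_mul_diagonal_mul_transpose hrow hz).dotProduct_inv_mulVec_le
      (posDef_mul_diagonal_mul_transpose hrow hz') (mul_diagonal_mul_transpose_mono U hzz') _)
    (hz j).le

end Leverage

section Scale

variable {n : ℕ} {z : Fin n → ℝ} {T : Finset (Fin n)}

theorem scale_of_notMem (α : ℝ) {j : Fin n} (hj : j ∉ T) : scale z T α j = z j := if_neg hj

theorem scale_pos (hz : ∀ k, 0 < z k) {α : ℝ} (hα : 0 < α) (k : Fin n) :
    0 < scale z T α k := by
  unfold scale
  split_ifs
  exacts [mul_pos hα (hz k), hz k]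

theorem scale_mono (hz : 0 ≤ z) {α β : ℝ} (hαβ : α ≤ β) : scale z T α ≤ scale z T β := by
  intro k
  unfold scale
  split_ifs
  exacts [mul_le_mul_of_nonneg_right hαβ (hz k), le_rfl]

theorem scale_eq_smul_scale_compl {α : ℝ} (hα : α ≠ 0) : scale z T α = α • scale z Tᶜ α⁻¹ := by
  ext k
  by_cases hk : k ∈ T <;> simp [scale, hk, hα]

end Scale

theorem lev_scale_antitoneOn {d n : ℕ} {U : Matrix (Fin d) (Fin n) ℝ} (hU : U.rank = d)
    {z : Fin n → ℝ} (hz : ∀ k, 0 < z k) {T : Finset (Fin n)} {j : Fin n} (hj : j ∉ T) :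
    AntitoneOn (fun α => lev U (scale z T α) j) (Set.Ioi 0) := fun α hα β _ hαβ =>
  lev_le_lev_of_le hU (scale_pos hz hα) (scale_mono (fun k => (hz k).le) hαβ)
    (by rw [scale_of_notMem _ hj, scale_of_notMem _ hj])

/-- Uniformly scaling up the coordinates in `T` increases the leverage scores inside `T`
and decreases the leverage scores outside `T`. -/
theorem lev_monotone_scaleUp {d n : ℕ} (U : Matrix (Fin d) (Fin n) ℝ)
    (hU : U.rank = d) (z : Fin n → ℝ) (hz : ∀ j, 0 < z j) (T : Finset (Fin n)) :
    (∀ j ∈ T, MonotoneOn (fun α => lev U (scale z T α) j) (Set.Ioi (0 : ℝ))) ∧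
    (∀ j ∉ T, AntitoneOn (fun α => lev U (scale z T α) j) (Set.Ioi (0 : ℝ))) := by
  refine ⟨fun j hj => ?_, fun j hj => lev_scale_antitoneOn hU hz hj⟩
  have hcompl : AntitoneOn (fun β => lev U (scale z Tᶜ β) j) (Set.Ioi 0) :=
    lev_scale_antitoneOn hU hz (Finset.notMem_compl.mpr hj)
  have hinv : Set.MapsTo (fun α : ℝ => α⁻¹) (Set.Ioi 0) (Set.Ioi 0) := fun _ hα =>
    Set.mem_Ioi.mpr (inv_pos.mpr hα)
  refine (hcompl.comp antitoneOn_inv_pos hinv).congr fun α hα => ?_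
  simp only [Function.comp_apply]
  rw [scale_eq_smul_scale_compl hα.ne', lev_smul U _ j hα.ne']
end

section
/- Let U ∈ ℝ^{d×n} be a frame, z ∈ ℝ^n a positive vector, T ⊆ [n], and let μ ∈ ℝ^d be the eigenvalues of the symmetric positive semidefinite matrix (U Z U^T)^{-1/2} U_T Z_T U_T^T (U Z U^T)^{-1/2}, all of which lie in [0,1]. Then the proxy function h(α) := Σ_{j∈T} lev^U_j(z ∘ (1_{T^c} + α·1_T)) satisfies, for all α > 0: h(α) = Σ_{i=1}^d α μ_i / (1 − μ_i + α μ_i), h(α) − h(1) = Σ_{i=1}^d (α−1) μ_i (1 − μ_i) / (1 + (α−1) μ_i), and h'(α) = Σ_{i=1}^d μ_i (1 − μ_i) / (1 + (α−1) μ_i)². -/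
open Matrix BigOperators

/-- The proxy function `h(α) = Σ_{j∈T} lev^U_j(z ∘ (1_{Tᶜ} + α·1_T))`. -/
noncomputable def proxyh {d n : ℕ} (U : Matrix (Fin d) (Fin n) ℝ) (z : Fin n → ℝ)
    (T : Finset (Fin n)) (α : ℝ) : ℝ :=
  ∑ j ∈ T, lev U (scale z T α) j

/-- The symmetric matrix `(U Z Uᵀ)^{-1/2} · U_T Z_T U_Tᵀ · (U Z Uᵀ)^{-1/2}`, where
`(U Z Uᵀ)^{-1/2}` is realized as the positive semidefinite square root of `(U Z Uᵀ)⁻¹`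
and `U_T Z_T U_Tᵀ = U · diag(z·1_T) · Uᵀ`. -/
noncomputable def Msym {d n : ℕ} (U : Matrix (Fin d) (Fin n) ℝ) (z : Fin n → ℝ)
    (T : Finset (Fin n)) (hA : ((U * Matrix.diagonal z * Uᵀ)⁻¹).PosSemidef) :
    Matrix (Fin d) (Fin d) ℝ :=
  ((hA.1.eigenvectorUnitary : Matrix (Fin d) (Fin d) ℝ) * diagonal (Real.sqrt ∘ hA.1.eigenvalues) *
      (star hA.1.eigenvectorUnitary : Matrix (Fin d) (Fin d) ℝ)) *
    (U * Matrix.diagonal (fun j => if j ∈ T then z j else 0) * Uᵀ) *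
    ((hA.1.eigenvectorUnitary : Matrix (Fin d) (Fin d) ℝ) * diagonal (Real.sqrt ∘ hA.1.eigenvalues) *
      (star hA.1.eigenvectorUnitary : Matrix (Fin d) (Fin d) ℝ))

/-! Write `A = U Z Uᵀ`, `B = U_T Z_T U_Tᵀ`, `S = A^{-1/2}` and `M = S B S`. Rescaling `z` on `T`
by `α` turns the Gram matrix into `A + (α - 1) B = S⁻¹ (1 + (α - 1) M) S⁻¹`, so that
`h(α) = α tr(B (A + (α - 1) B)⁻¹) = α tr(M (1 + (α - 1) M)⁻¹)`, and diagonalizing `M` gives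
`h(α) = Σ α μᵢ / (1 + (α - 1) μᵢ)`. The difference and derivative formulas are then scalar
identities, the denominators being positive because `μᵢ ∈ [0, 1]`. -/

namespace Matrix

open scoped ComplexOrder

variable {m n R : Type*} [Fintype n]

theorem mulVec_injective_of_rank_eq_card [Field R] {A : Matrix m n R}
    (hA : A.rank = Fintype.card n) : Function.Injective A.mulVec := by
  have hdim := A.mulVecLin.finrank_range_add_finrank_ker
  rw [← rank, hA, Module.finrank_fintype_fun_eq_card] at hdim
  have hker : LinearMap.ker A.mulVecLin = ⊥ := Submodule.finrank_eq_zero.mp (by omega)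
  exact LinearMap.ker_eq_bot.mp hker

theorem posDef_mul_diagonal_mul_transpose_s5 [Fintype m] [DecidableEq n] {U : Matrix m n ℝ}
    (hU : U.rank = Fintype.card m) {z : n → ℝ} (hz : ∀ j, 0 < z j) :
    (U * diagonal z * Uᵀ).PosDef := by
  have hinj : Function.Injective U.vecMul := by
    have h := mulVec_injective_of_rank_eq_card (A := Uᵀ) (by rw [rank_transpose, hU])
    rwa [show Uᵀ.mulVec = U.vecMul from funext (mulVec_transpose U)] at h
  simpa using (posDef_diagonal_iff.mpr hz).mul_mul_conjTranspose_same hinj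

theorem sum_mul_dotProduct_mulVec_eq_trace [Fintype m] [CommRing R] [DecidableEq n]
    (U : Matrix m n R) (w : n → R) (C : Matrix m m R) :
    ∑ j, w j * ((fun i => U i j) ⬝ᵥ (C *ᵥ fun i => U i j)) = (U * diagonal w * Uᵀ * C).trace := by
  have hdiag (j : n) : (fun i => U i j) ⬝ᵥ (C *ᵥ fun i => U i j) = (Uᵀ * C * U) j j := by
    simp only [mul_apply, transpose_apply, dotProduct, mulVec, Finset.sum_mul, Finset.mul_sum]
    rw [Finset.sum_comm]
    exact Finset.sum_congr rfl fun _ _ => Finset.sum_congr rfl fun _ _ => by ring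
  rw [Matrix.mul_assoc, Matrix.mul_assoc, trace_mul_comm, Matrix.mul_assoc]
  simp [hdiag, trace, diagonal_mul]

theorem PosSemidef.cfc_sqrt_mul_self {𝕜 : Type*} [RCLike 𝕜] [DecidableEq n] {P : Matrix n n 𝕜}
    (hP : P.PosSemidef) : hP.1.cfc Real.sqrt * hP.1.cfc Real.sqrt = P := by
  conv_rhs => rw [hP.1.spectral_theorem]
  rw [IsHermitian.cfc, ← map_mul, diagonal_mul_diagonal]
  congr 2
  funext i
  simp [← RCLike.ofReal_mul, Real.mul_self_sqrt (hP.eigenvalues_nonneg i)]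

theorem IsHermitian.trace_mul_inv_one_add_smul [DecidableEq n] {M : Matrix n n ℝ}
    (hM : M.IsHermitian) {c : ℝ} (hc : ∀ i, 1 + c * hM.eigenvalues i ≠ 0) :
    (M * (1 + c • M)⁻¹).trace = ∑ i, hM.eigenvalues i / (1 + c * hM.eigenvalues i) := by
  set φ := Unitary.conjStarAlgAut ℝ (Matrix n n ℝ) hM.eigenvectorUnitary
  set μ := hM.eigenvalues
  have hMφ : M = φ (diagonal μ) := by
    have h := hM.spectral_theorem
    rwa [RCLike.ofReal_real_eq_id, Function.id_comp] at h
  have hNφ : 1 + c • M = φ (diagonal fun i => 1 + c * μ i) := by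
    rw [hMφ, ← map_one φ, ← map_smul, ← map_add, ← diagonal_one, ← diagonal_smul, ← diagonal_add]
    rfl
  have hNinv : (1 + c • M)⁻¹ = φ (diagonal fun i => (1 + c * μ i)⁻¹) := by
    refine inv_eq_right_inv ?_
    rw [hNφ, ← map_mul, diagonal_mul_diagonal, ← map_one φ, ← diagonal_one]
    congr 2
    funext i
    exact mul_inv_cancel₀ (hc i)
  rw [hNinv, hMφ, ← map_mul, diagonal_mul_diagonal, Unitary.conjStarAlgAut_apply, trace_mul_cycle,
    Unitary.coe_star_mul_self, Matrix.one_mul, trace_diagonal]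
  rfl

theorem trace_mul_inv_add_smul_eq [CommRing R] [DecidableEq n] {A B S : Matrix n n R}
    (hA : IsUnit A.det) (hS : S * S = A⁻¹) (c : R) :
    (B * (A + c • B)⁻¹).trace = (S * B * S * (1 + c • (S * B * S))⁻¹).trace := by
  have hSdet : IsUnit S.det :=
    isUnit_of_mul_isUnit_left (by rw [← det_mul, hS]; exact isUnit_nonsing_inv_det A hA)
  have hA' : A = S⁻¹ * S⁻¹ := by rw [← mul_inv_rev, hS, nonsing_inv_nonsing_inv A hA]
  have hsum : A + c • B = S⁻¹ * (1 + c • (S * B * S)) * S⁻¹ := by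
    rw [hA', Matrix.mul_add, Matrix.add_mul, Matrix.mul_one, Matrix.mul_smul, Matrix.smul_mul]
    simp only [← Matrix.mul_assoc, nonsing_inv_mul S hSdet, Matrix.one_mul]
    simp only [Matrix.mul_assoc, mul_nonsing_inv S hSdet, Matrix.mul_one]
  rw [hsum, Matrix.mul_inv_rev, Matrix.mul_inv_rev, nonsing_inv_nonsing_inv S hSdet,
    ← Matrix.mul_assoc, ← Matrix.mul_assoc, trace_mul_comm, ← Matrix.mul_assoc, ← Matrix.mul_assoc]

end Matrix

theorem diagonal_scale {n : ℕ} (z : Fin n → ℝ) (T : Finset (Fin n)) (α : ℝ) :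
    diagonal (scale z T α)
      = diagonal z + (α - 1) • diagonal (fun j => if j ∈ T then z j else 0) := by
  rw [← diagonal_smul, diagonal_add]
  congr 1
  funext j
  simp only [scale, Pi.smul_apply, smul_eq_mul]
  split_ifs <;> ring

theorem proxyh_eq_mul_trace {d n : ℕ} (U : Matrix (Fin d) (Fin n) ℝ) (z : Fin n → ℝ)
    (T : Finset (Fin n)) (α : ℝ) :
    proxyh U z T α = α * ((U * diagonal (fun j => if j ∈ T then z j else 0) * Uᵀ) *
      (U * diagonal z * Uᵀ
        + (α - 1) • (U * diagonal (fun j => if j ∈ T then z j else 0) * Uᵀ))⁻¹).trace := by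
  have hC : U * diagonal (scale z T α) * Uᵀ = U * diagonal z * Uᵀ
      + (α - 1) • (U * diagonal (fun j => if j ∈ T then z j else 0) * Uᵀ) := by
    rw [diagonal_scale, Matrix.mul_add, Matrix.add_mul, Matrix.mul_smul, Matrix.smul_mul]
  let q j := (fun i => U i j) ⬝ᵥ ((U * diagonal (scale z T α) * Uᵀ)⁻¹ *ᵥ fun i => U i j)
  calc proxyh U z T α = ∑ j ∈ T, α * ((if j ∈ T then z j else 0) * q j) :=
        Finset.sum_congr rfl fun j hj => by simp only [lev, scale, if_pos hj, q]; ring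
    _ = ∑ j, α * ((if j ∈ T then z j else 0) * q j) :=
        Finset.sum_subset (Finset.subset_univ T) fun j _ hj => by simp [hj]
    _ = _ := by rw [← Finset.mul_sum, sum_mul_dotProduct_mulVec_eq_trace, hC]

theorem proxyh_eq_sum_eigenvalues {d n : ℕ} {U : Matrix (Fin d) (Fin n) ℝ} (hU : U.rank = d)
    {z : Fin n → ℝ} (hz : ∀ j, 0 < z j) {T : Finset (Fin n)}
    {hA : ((U * diagonal z * Uᵀ)⁻¹).PosSemidef} (hM : (Msym U z T hA).IsHermitian) {α : ℝ}
    (hα : ∀ i, 1 + (α - 1) * hM.eigenvalues i ≠ 0) :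
    proxyh U z T α = α * ∑ i, hM.eigenvalues i / (1 + (α - 1) * hM.eigenvalues i) := by
  have hAdet : IsUnit (U * diagonal z * Uᵀ).det :=
    (posDef_mul_diagonal_mul_transpose_s5 (by rwa [Fintype.card_fin]) hz).det_pos.ne'.isUnit
  -- the square root written out in `Msym` is `IsHermitian.cfc Real.sqrt` unfolded
  have hMsym : Msym U z T hA = hA.1.cfc Real.sqrt
      * (U * diagonal (fun j => if j ∈ T then z j else 0) * Uᵀ) * hA.1.cfc Real.sqrt := rfl
  rw [proxyh_eq_mul_trace, trace_mul_inv_add_smul_eq hAdet hA.cfc_sqrt_mul_self, ← hMsym,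
    hM.trace_mul_inv_one_add_smul hα]

noncomputable def proxyTerm (μ α : ℝ) : ℝ := α * μ / (1 - μ + α * μ)

theorem one_sub_add_mul_pos {μ α : ℝ} (hμ : μ ∈ Set.Icc (0 : ℝ) 1) (hα : 0 < α) :
    0 < 1 - μ + α * μ := by
  obtain ⟨hμ0, hμ1⟩ := hμ
  rcases hμ1.lt_or_eq with hμ1 | rfl
  · nlinarith [mul_nonneg hα.le hμ0]
  · simpa using hα

theorem proxyTerm_sub_proxyTerm_one {μ α : ℝ} (hμ : μ ∈ Set.Icc (0 : ℝ) 1) (hα : 0 < α) :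
    proxyTerm μ α - proxyTerm μ 1 = (α - 1) * μ * (1 - μ) / (1 + (α - 1) * μ) := by
  have hden := (one_sub_add_mul_pos hμ hα).ne'
  rw [proxyTerm, proxyTerm, show 1 + (α - 1) * μ = 1 - μ + α * μ by ring]
  field_simp
  ring

theorem hasDerivAt_proxyTerm {μ α : ℝ} (hμ : μ ∈ Set.Icc (0 : ℝ) 1) (hα : 0 < α) :
    HasDerivAt (proxyTerm μ) (μ * (1 - μ) / (1 + (α - 1) * μ) ^ 2) α := by
  have hnum : HasDerivAt (fun a => a * μ) μ α := by simpa using (hasDerivAt_id α).mul_const μ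
  have hden : HasDerivAt (fun a => 1 - μ + a * μ) μ α := hnum.const_add (1 - μ)
  refine (hnum.div hden (one_sub_add_mul_pos hμ hα).ne').congr_deriv ?_
  rw [show 1 + (α - 1) * μ = 1 - μ + α * μ by ring]
  ring

/-- Eigenvalue expansion of the proxy function: if `μ` are the eigenvalues of
`(U Z Uᵀ)^{-1/2} U_T Z_T U_Tᵀ (U Z Uᵀ)^{-1/2}` (all lying in `[0,1]`), then for all `α > 0`,
`h(α) = Σ_i α μ_i/(1−μ_i+αμ_i)`, `h(α) − h(1) = Σ_i (α−1)μ_i(1−μ_i)/(1+(α−1)μ_i)`, and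
`h'(α) = Σ_i μ_i(1−μ_i)/(1+(α−1)μ_i)²`. -/
theorem proxy_eigen_expansion {d n : ℕ} (U : Matrix (Fin d) (Fin n) ℝ)
    (hU : U.rank = d) (z : Fin n → ℝ) (hz : ∀ j, 0 < z j) (T : Finset (Fin n))
    (hA : ((U * Matrix.diagonal z * Uᵀ)⁻¹).PosSemidef)
    (hM : (Msym U z T hA).IsHermitian)
    (μ : Fin d → ℝ) (hμ : μ = hM.eigenvalues)
    (hμ01 : ∀ i, μ i ∈ Set.Icc (0 : ℝ) 1) :
    ∀ α : ℝ, 0 < α →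
      proxyh U z T α = ∑ i, α * μ i / (1 - μ i + α * μ i) ∧
      proxyh U z T α - proxyh U z T 1
        = ∑ i, (α - 1) * μ i * (1 - μ i) / (1 + (α - 1) * μ i) ∧
      HasDerivAt (proxyh U z T)
        (∑ i, μ i * (1 - μ i) / (1 + (α - 1) * μ i) ^ 2) α := by
  subst hμ
  have hproxy : ∀ α : ℝ, 0 < α → proxyh U z T α = ∑ i, proxyTerm (hM.eigenvalues i) α := by
    intro α hα
    have hden (i : Fin d) :
        1 + (α - 1) * hM.eigenvalues i = 1 - hM.eigenvalues i + α * hM.eigenvalues i := by ring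
    rw [proxyh_eq_sum_eigenvalues hU hz hM fun i => hden i ▸ (one_sub_add_mul_pos (hμ01 i) hα).ne',
      Finset.mul_sum]
    simp only [hden, proxyTerm, mul_div_assoc]
  intro α hα
  refine ⟨hproxy α hα, ?_, ?_⟩
  · rw [hproxy α hα, hproxy 1 one_pos, ← Finset.sum_sub_distrib]
    exact Finset.sum_congr rfl fun i _ => proxyTerm_sub_proxyTerm_one (hμ01 i) hα
  · have hderiv := HasDerivAt.fun_sum (u := Finset.univ) fun i _ =>
      hasDerivAt_proxyTerm (hμ01 i) hα
    exact hderiv.congr_of_eventuallyEq (Filter.eventually_of_mem (Ioi_mem_nhds hα) hproxy)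
end

section
/- Let μ ∈ [0,1]^d and define h(α) := Σ_{i=1}^d α μ_i / (1 + (α−1) μ_i). Then for all 1 ≤ α ≤ α': (α/α')·(α'−α)·h'(α) ≤ h(α') − h(α) ≤ (α'−α)·h'(α). Equivalently, the Bregman divergence D(β|α) := h'(α)(β−α) + h(α) − h(β) satisfies 0 ≤ D(α'|α) ≤ (α'/α − 1)·(h(α') − h(α)). -/
open BigOperators

/-- The eigenvalue form of the proxy function: `h(α) = Σ_i α μ_i/(1+(α−1)μ_i)`. -/
noncomputable def hfun {d : ℕ} (μ : Fin d → ℝ) (α : ℝ) : ℝ :=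
  ∑ i, α * μ i / (1 + (α - 1) * μ i)

/-- Its derivative: `h'(α) = Σ_i μ_i(1−μ_i)/(1+(α−1)μ_i)²`. -/
noncomputable def hderiv {d : ℕ} (μ : Fin d → ℝ) (α : ℝ) : ℝ :=
  ∑ i, μ i * (1 - μ i) / (1 + (α - 1) * μ i) ^ 2

/-! Each summand `a ↦ a m / (1 + (a - 1) m)` has the exact secant slope
`m (1 - m) / (D a · D b)` with `D a = 1 + (a - 1) m`, while its derivative at `a` is
`m (1 - m) / (D a)²`. Since `D a ≤ D b` and `a · D b ≤ b · D a`, the ratio of the two lies in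
`[a / b, 1]`. Summing gives the two-sided bound, and the Bregman form is a rearrangement. -/

section Summand

variable {m a b : ℝ}

lemma one_add_sub_one_mul_pos (hm0 : 0 ≤ m) (hm1 : m ≤ 1) (ha : 0 < a) :
    0 < 1 + (a - 1) * m := by
  nlinarith [mul_nonneg hm0 ha.le, mul_pos ha ha]

lemma summand_sub_eq (ha : 1 + (a - 1) * m ≠ 0) (hb : 1 + (b - 1) * m ≠ 0) :
    b * m / (1 + (b - 1) * m) - a * m / (1 + (a - 1) * m)
      = (b - a) * (m * (1 - m) / ((1 + (a - 1) * m) * (1 + (b - 1) * m))) := by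
  rw [div_sub_div _ _ hb ha, mul_div_assoc', mul_comm (1 + (a - 1) * m)]
  congr 1
  ring

lemma summand_sub_le (hm0 : 0 ≤ m) (hm1 : m ≤ 1) (ha : 0 < a) (hab : a ≤ b) :
    b * m / (1 + (b - 1) * m) - a * m / (1 + (a - 1) * m)
      ≤ (b - a) * (m * (1 - m) / (1 + (a - 1) * m) ^ 2) := by
  have hDa := one_add_sub_one_mul_pos hm0 hm1 ha
  have hDb := one_add_sub_one_mul_pos hm0 hm1 (ha.trans_le hab)
  rw [summand_sub_eq hDa.ne' hDb.ne', sq]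
  have hDab : 1 + (a - 1) * m ≤ 1 + (b - 1) * m := by nlinarith
  gcongr

lemma le_summand_sub (hm0 : 0 ≤ m) (hm1 : m ≤ 1) (ha : 0 < a) (hab : a ≤ b) :
    a / b * (b - a) * (m * (1 - m) / (1 + (a - 1) * m) ^ 2)
      ≤ b * m / (1 + (b - 1) * m) - a * m / (1 + (a - 1) * m) := by
  have hb := ha.trans_le hab
  have hDa := one_add_sub_one_mul_pos hm0 hm1 ha
  have hDb := one_add_sub_one_mul_pos hm0 hm1 hb
  have hkey : a * (1 + (b - 1) * m) ≤ b * (1 + (a - 1) * m) := by nlinarith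
  have hmm : 0 ≤ m * (1 - m) := mul_nonneg hm0 (by linarith)
  rw [summand_sub_eq hDa.ne' hDb.ne', mul_comm (a / b), mul_assoc]
  refine mul_le_mul_of_nonneg_left ?_ (sub_nonneg.2 hab)
  rw [div_mul_div_comm, div_le_div_iff₀ (by positivity) (by positivity), sq]
  calc a * (m * (1 - m)) * ((1 + (a - 1) * m) * (1 + (b - 1) * m))
      = m * (1 - m) * (1 + (a - 1) * m) * (a * (1 + (b - 1) * m)) := by ring
    _ ≤ m * (1 - m) * (1 + (a - 1) * m) * (b * (1 + (a - 1) * m)) := by gcongr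
    _ = m * (1 - m) * (b * ((1 + (a - 1) * m) * (1 + (a - 1) * m))) := by ring

end Summand

section Proxy

variable {d : ℕ} {μ : Fin d → ℝ} {a b : ℝ}

lemma hfun_sub_le (hμ : ∀ i, μ i ∈ Set.Icc (0 : ℝ) 1) (ha : 0 < a) (hab : a ≤ b) :
    hfun μ b - hfun μ a ≤ (b - a) * hderiv μ a := by
  rw [hfun, hfun, hderiv, Finset.mul_sum, ← Finset.sum_sub_distrib]
  exact Finset.sum_le_sum fun i _ => summand_sub_le (hμ i).1 (hμ i).2 ha hab

lemma le_hfun_sub (hμ : ∀ i, μ i ∈ Set.Icc (0 : ℝ) 1) (ha : 0 < a) (hab : a ≤ b) :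
    a / b * (b - a) * hderiv μ a ≤ hfun μ b - hfun μ a := by
  rw [hfun, hfun, hderiv, Finset.mul_sum, ← Finset.sum_sub_distrib]
  exact Finset.sum_le_sum fun i _ => le_summand_sub (hμ i).1 (hμ i).2 ha hab

end Proxy

lemma sub_le_div_sub_one_mul_of_div_mul_le {a b x y : ℝ} (ha : 0 < a) (hab : a ≤ b)
    (h : a / b * x ≤ y) : x - y ≤ (b / a - 1) * y := by
  have hb := ha.trans_le hab
  have hx : x ≤ b / a * y :=
    calc x = b / a * (a / b * x) := by field_simp
      _ ≤ b / a * y := by gcongr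
  linarith

/-- Approximate linearity: for `1 ≤ α ≤ α'`,
`(α/α')(α'−α)h'(α) ≤ h(α') − h(α) ≤ (α'−α)h'(α)`; equivalently the Bregman divergence
`D(α'|α) = h'(α)(α'−α) + h(α) − h(α')` satisfies `0 ≤ D(α'|α) ≤ (α'/α − 1)(h(α') − h(α))`. -/
theorem hfun_bregman {d : ℕ} (μ : Fin d → ℝ) (hμ : ∀ i, μ i ∈ Set.Icc (0 : ℝ) 1)
    (α α' : ℝ) (hα : 1 ≤ α) (hαα' : α ≤ α') :
    ((α / α') * (α' - α) * hderiv μ α ≤ hfun μ α' - hfun μ α ∧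
      hfun μ α' - hfun μ α ≤ (α' - α) * hderiv μ α) ∧
    (0 ≤ hderiv μ α * (α' - α) + hfun μ α - hfun μ α' ∧
      hderiv μ α * (α' - α) + hfun μ α - hfun μ α'
        ≤ (α' / α - 1) * (hfun μ α' - hfun μ α)) := by
  have hα0 : 0 < α := by linarith
  have hlower := le_hfun_sub hμ hα0 hαα'
  have hupper := hfun_sub_le hμ hα0 hαα'
  refine ⟨⟨hlower, hupper⟩, by linarith, ?_⟩
  rw [mul_assoc] at hlower
  have hbreg := sub_le_div_sub_one_mul_of_div_mul_le hα0 hαα' hlower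
  linarith
end

section
/- Let μ ∈ [0,1]^d, let h(α) := Σ_{i=1}^d α μ_i / (1 + (α−1) μ_i), and let γ ∈ (0,1]. Suppose Σ_{i : μ_i > 0} (1 − μ_i) ≥ γ and h'(1) < γ/4. Then μ_s := Σ_{i : μ_i < 1/2} μ_i > 0, and for every δ ∈ [0,1], setting α := 1 + δ/μ_s one has δ/4 ≤ h(α) − h(1) ≤ γ/2 + δ. Consequently, any α_* ≥ 1 with h(α_*) = h(1) + γ/5 satisfies α_* ≤ 1 + γ/μ_s. -/
open BigOperators

/-!
Writing `α = 1 + β`, the gain `h(1 + β) − h(1)` is a sum of per-eigenvalue increments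
`β μ (1 − μ) / (1 + β μ)`. An increment is at most `β μ`, and at most `1 − μ ≤ 2 μ (1 − μ)` when
`μ ≥ 1/2`, so the gain is at most `β μ_s + 2 h'(1)`; on the eigenvalues below `1/2` it is at least
`β μ / (2 (1 + β μ_s))`, so the gain is at least `β μ_s / (2 (1 + β μ_s))`. Taking `β = δ / μ_s`
gives both bounds, and monotonicity of `h` turns the lower bound at `δ = γ` into the bound on `α_*`.
The feasibility hypothesis forces an eigenvalue in `(0, 1/2)`, since otherwise
`Σ_{μ_i > 0} (1 − μ_i) ≤ 2 h'(1) < γ/2`.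
-/

open Finset

noncomputable def hfunIncrement (β m : ℝ) : ℝ :=
  β * m * (1 - m) / (1 + β * m)

noncomputable def smallMass {d : ℕ} (μ : Fin d → ℝ) : ℝ :=
  ∑ i ∈ univ.filter (fun i => μ i < 1 / 2), μ i

section Increment

variable {β m : ℝ}

lemma hfunIncrement_le_mul (hβ : 0 ≤ β) (hm0 : 0 ≤ m) :
    hfunIncrement β m ≤ β * m := by
  have hβm : 0 ≤ β * m := mul_nonneg hβ hm0
  rw [hfunIncrement, div_le_iff₀ (by linarith)]
  nlinarith [mul_nonneg hβm hβm]

lemma hfunIncrement_le_one_sub (hβ : 0 ≤ β) (hm0 : 0 ≤ m) (hm1 : m ≤ 1) :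
    hfunIncrement β m ≤ 1 - m := by
  have hβm : 0 ≤ β * m := mul_nonneg hβ hm0
  rw [hfunIncrement, div_le_iff₀ (by linarith)]
  nlinarith

lemma hfunIncrement_le_ite_add (hβ : 0 ≤ β) (hm0 : 0 ≤ m) (hm1 : m ≤ 1) :
    hfunIncrement β m ≤ (if m < 1 / 2 then β * m else 0) + 2 * (m * (1 - m)) := by
  split_ifs with hm
  · nlinarith [hfunIncrement_le_mul hβ hm0]
  · nlinarith [hfunIncrement_le_one_sub hβ hm0 hm1]

lemma div_le_hfunIncrement {δ : ℝ} (hβ : 0 ≤ β) (hm0 : 0 ≤ m) (hm : m ≤ 1 / 2)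
    (hβm : β * m ≤ δ) : β * m / (2 * (1 + δ)) ≤ hfunIncrement β m := by
  have hβm0 : 0 ≤ β * m := mul_nonneg hβ hm0
  rw [hfunIncrement, div_le_div_iff₀ (by linarith) (by linarith)]
  nlinarith [mul_nonneg hβm0 (sub_nonneg.2 hβm), mul_nonneg hβm0 (by linarith : 0 ≤ 1 - 2 * m),
    mul_nonneg (mul_nonneg hβm0 (by linarith : 0 ≤ 1 - 2 * m)) (by linarith : 0 ≤ 1 + δ)]

lemma hfunIncrement_monotoneOn (hm0 : 0 ≤ m) (hm1 : m ≤ 1) :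
    MonotoneOn (fun β => hfunIncrement β m) (Set.Ici 0) := by
  intro b (hb : 0 ≤ b) c (hc : 0 ≤ c) hbc
  have hbm : 0 ≤ b * m := mul_nonneg hb hm0
  simp only [hfunIncrement]
  rw [div_le_div_iff₀ (by linarith) (by nlinarith)]
  nlinarith [mul_nonneg (mul_nonneg hm0 (sub_nonneg.2 hm1)) (sub_nonneg.2 hbc)]

end Increment

section Proxy

variable {d : ℕ} {μ : Fin d → ℝ}

lemma hfun_one_add_sub_hfun_one (μ : Fin d → ℝ) {β : ℝ} (hβ : ∀ i, 1 + β * μ i ≠ 0) :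
    hfun μ (1 + β) - hfun μ 1 = ∑ i, hfunIncrement β (μ i) := by
  rw [hfun, hfun, ← sum_sub_distrib]
  refine sum_congr rfl fun i _ => ?_
  have := hβ i
  simp only [hfunIncrement, add_sub_cancel_left, sub_self, zero_mul, add_zero, div_one]
  field_simp
  ring

lemma hfun_one_add_sub_hfun_one_of_nonneg (hμ : ∀ i, μ i ∈ Set.Icc (0 : ℝ) 1) {β : ℝ}
    (hβ : 0 ≤ β) : hfun μ (1 + β) - hfun μ 1 = ∑ i, hfunIncrement β (μ i) :=
  hfun_one_add_sub_hfun_one μ fun i => by nlinarith [mul_nonneg hβ (hμ i).1]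

lemma hfun_monotoneOn (hμ : ∀ i, μ i ∈ Set.Icc (0 : ℝ) 1) :
    MonotoneOn (hfun μ) (Set.Ici 1) := by
  intro a (ha : 1 ≤ a) b (hb : 1 ≤ b) hab
  have hincr : ∑ i, hfunIncrement (a - 1) (μ i) ≤ ∑ i, hfunIncrement (b - 1) (μ i) :=
    sum_le_sum fun i _ => hfunIncrement_monotoneOn (hμ i).1 (hμ i).2
      (sub_nonneg.2 ha) (sub_nonneg.2 hb) (by linarith)
  have hsa := hfun_one_add_sub_hfun_one_of_nonneg hμ (sub_nonneg.2 ha)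
  have hsb := hfun_one_add_sub_hfun_one_of_nonneg hμ (sub_nonneg.2 hb)
  rw [add_sub_cancel] at hsa hsb
  linarith

lemma hderiv_one (μ : Fin d → ℝ) : hderiv μ 1 = ∑ i, μ i * (1 - μ i) := by
  simp [hderiv]

lemma hfun_one_add_sub_hfun_one_le (hμ : ∀ i, μ i ∈ Set.Icc (0 : ℝ) 1) {β : ℝ} (hβ : 0 ≤ β) :
    hfun μ (1 + β) - hfun μ 1 ≤ β * smallMass μ + 2 * hderiv μ 1 := by
  rw [hfun_one_add_sub_hfun_one_of_nonneg hμ hβ, smallMass, mul_sum, sum_filter, hderiv_one,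
    mul_sum, ← sum_add_distrib]
  exact sum_le_sum fun i _ => hfunIncrement_le_ite_add hβ (hμ i).1 (hμ i).2

lemma le_hfun_one_add_sub_hfun_one (hμ : ∀ i, μ i ∈ Set.Icc (0 : ℝ) 1) {β : ℝ} (hβ : 0 ≤ β) :
    β * smallMass μ / (2 * (1 + β * smallMass μ)) ≤ hfun μ (1 + β) - hfun μ 1 := by
  set T := univ.filter (fun i => μ i < 1 / 2)
  have hincr_nonneg : ∀ i, 0 ≤ hfunIncrement β (μ i) := fun i =>
    div_nonneg (mul_nonneg (mul_nonneg hβ (hμ i).1) (sub_nonneg.2 (hμ i).2))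
      (by nlinarith [mul_nonneg hβ (hμ i).1])
  rw [hfun_one_add_sub_hfun_one_of_nonneg hμ hβ]
  calc β * smallMass μ / (2 * (1 + β * smallMass μ))
      = ∑ i ∈ T, β * μ i / (2 * (1 + β * smallMass μ)) := by
        rw [← sum_div, ← mul_sum]; rfl
    _ ≤ ∑ i ∈ T, hfunIncrement β (μ i) := by
        refine sum_le_sum fun i hi => div_le_hfunIncrement hβ (hμ i).1 ?_ ?_
        · exact (mem_filter.1 hi).2.le
        · exact mul_le_mul_of_nonneg_left
            (single_le_sum (fun j _ => (hμ j).1) hi) hβ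
    _ ≤ ∑ i, hfunIncrement β (μ i) :=
        sum_le_sum_of_subset_of_nonneg (subset_univ T) fun i _ _ => hincr_nonneg i

lemma exists_pos_lt_half_of_two_mul_hderiv_lt (hμ : ∀ i, μ i ∈ Set.Icc (0 : ℝ) 1)
    (h : 2 * hderiv μ 1 < ∑ i ∈ univ.filter (fun i => 0 < μ i), (1 - μ i)) :
    ∃ i, 0 < μ i ∧ μ i < 1 / 2 := by
  by_contra! hlarge
  refine h.not_ge ?_
  rw [hderiv_one, mul_sum]
  calc ∑ i ∈ univ.filter (fun i => 0 < μ i), (1 - μ i)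
      ≤ ∑ i ∈ univ.filter (fun i => 0 < μ i), 2 * (μ i * (1 - μ i)) :=
        sum_le_sum fun i hi => by nlinarith [hlarge i (mem_filter.1 hi).2, (hμ i).2]
    _ ≤ ∑ i, 2 * (μ i * (1 - μ i)) :=
        sum_le_sum_of_subset_of_nonneg (filter_subset _ _) fun i _ _ =>
          by nlinarith [(hμ i).1, (hμ i).2]

lemma smallMass_pos (hμ : ∀ i, μ i ∈ Set.Icc (0 : ℝ) 1) (h : ∃ i, 0 < μ i ∧ μ i < 1 / 2) :
    0 < smallMass μ := by
  obtain ⟨i, hi0, hi⟩ := h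
  exact sum_pos' (fun j _ => (hμ j).1) ⟨i, mem_filter.2 ⟨mem_univ i, hi⟩, hi0⟩

end Proxy

/-- Small-derivative case of the update range lemma: if `Σ_{i : μ_i > 0} (1 − μ_i) ≥ γ`
and `h'(1) < γ/4`, then `μ_s := Σ_{i : μ_i < 1/2} μ_i > 0`; for every `δ ∈ [0,1]`,
`α := 1 + δ/μ_s` satisfies `δ/4 ≤ h(α) − h(1) ≤ γ/2 + δ`; and any `α_* ≥ 1` with
`h(α_*) = h(1) + γ/5` satisfies `α_* ≤ 1 + γ/μ_s`. -/
theorem update_range_small_derivative {d : ℕ} (μ : Fin d → ℝ)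
    (hμ : ∀ i, μ i ∈ Set.Icc (0 : ℝ) 1) (γ : ℝ) (hγ0 : 0 < γ) (hγ1 : γ ≤ 1)
    (hfeas : γ ≤ ∑ i ∈ Finset.univ.filter (fun i => 0 < μ i), (1 - μ i))
    (hder : hderiv μ 1 < γ / 4) :
    0 < ∑ i ∈ Finset.univ.filter (fun i => μ i < 1 / 2), μ i ∧
    (∀ δ : ℝ, 0 ≤ δ → δ ≤ 1 →
      δ / 4 ≤ hfun μ (1 + δ / ∑ i ∈ Finset.univ.filter (fun i => μ i < 1 / 2), μ i)
        - hfun μ 1 ∧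
      hfun μ (1 + δ / ∑ i ∈ Finset.univ.filter (fun i => μ i < 1 / 2), μ i)
        - hfun μ 1 ≤ γ / 2 + δ) ∧
    (∀ αstar : ℝ, 1 ≤ αstar → hfun μ αstar = hfun μ 1 + γ / 5 →
      αstar ≤ 1 + γ / ∑ i ∈ Finset.univ.filter (fun i => μ i < 1 / 2), μ i) := by
  have hs : 0 < smallMass μ :=
    smallMass_pos hμ (exists_pos_lt_half_of_two_mul_hderiv_lt hμ (by linarith))
  have bounds : ∀ δ : ℝ, 0 ≤ δ → δ ≤ 1 →
      δ / 4 ≤ hfun μ (1 + δ / smallMass μ) - hfun μ 1 ∧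
      hfun μ (1 + δ / smallMass μ) - hfun μ 1 ≤ γ / 2 + δ := by
    intro δ hδ0 hδ1
    have hβ : 0 ≤ δ / smallMass μ := div_nonneg hδ0 hs.le
    have hβs : δ / smallMass μ * smallMass μ = δ := div_mul_cancel₀ δ hs.ne'
    have hlow := le_hfun_one_add_sub_hfun_one hμ hβ
    have hup := hfun_one_add_sub_hfun_one_le hμ hβ
    rw [hβs] at hlow hup
    have hquarter : δ / 4 ≤ δ / (2 * (1 + δ)) := by
      rw [div_le_div_iff₀ (by norm_num) (by linarith)]
      nlinarith
    exact ⟨hquarter.trans hlow, by linarith⟩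
  refine ⟨hs, bounds, fun αstar hα heq => ?_⟩
  change αstar ≤ 1 + γ / smallMass μ
  by_contra! hgt
  have hγs : 0 ≤ γ / smallMass μ := div_nonneg hγ0.le hs.le
  have hmono := hfun_monotoneOn hμ (by simpa using hγs) hα hgt.le
  linarith [(bounds γ hγ0.le hγ1).1]
end

section
/- Let f : ℝ → ℝ be differentiable and concave with f'(α) > 0 for all α, and let b' < b be reals. Suppose there exist α_* with f(α_*) = b' and an initial point α_0 with f(α_0) ≤ b. Define the Newton–Dinkelbach iterates by α_{t+1} := α_t + (b − f(α_t))/f'(α_t). Let ε ∈ (0,1) satisfy ε·(b − f(α_0)) ≤ b − b', and set T := 1 + ⌈log_{1/(1−ε)}(max{1, D_f(α_* | α_0)/(b − b')})⌉, where D_f(β|α) := f'(α)(β−α) + f(α) − f(β) is the Bregman divergence of f. Then there exists t ≤ T with b' ≤ f(α_t) ≤ b. -/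
/-!
Let `D t := D_f(α_* | α_t)`. Since `f' (α_t) (α_{t+1} - α_t) = b - f(α_t)`, one has the identity
`D t = f'(α_t) (α_* - α_{t+1}) + (b - b')`, so `D t ≤ b - b'` forces `α_* ≤ α_{t+1}`, i.e. termination
at the next step. Concavity keeps every iterate below `b`, so the values `f(α_t)` increase. As long
as `f(α_{t+1}) < b'`, the choice of `ε` means the step gained at most a `(1 - ε)` fraction of the
gap `b - f(α_t)`, and the secant bound `f'(α_{t+1}) (α_{t+1} - α_t) ≤ f(α_{t+1}) - f(α_t)` turns
this into `f'(α_{t+1}) ≤ (1 - ε) f'(α_t)`; with the identity this gives `D (t+1) ≤ (1 - ε) D t`.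
So `D` decays geometrically until it drops below `b - b'`, which takes at most `T - 1` steps.
-/

open Real Set

lemma ConcaveOn.le_add_deriv_mul_sub {f : ℝ → ℝ} {S : Set ℝ} {x y : ℝ} (hconc : ConcaveOn ℝ S f)
    (hx : x ∈ S) (hy : y ∈ S) (hdiff : DifferentiableAt ℝ f x) :
    f y ≤ f x + deriv f x * (y - x) := by
  rcases lt_trichotomy x y with hxy | rfl | hxy
  · have hs := hconc.slope_le_deriv hx hy hxy hdiff
    rw [slope_def_field, div_le_iff₀ (sub_pos.2 hxy)] at hs
    linarith
  · simp
  · have hs := hconc.deriv_le_slope hy hx hxy hdiff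
    rw [slope_def_field, le_div_iff₀ (sub_pos.2 hxy)] at hs
    linarith

lemma pow_mul_le_of_logb_le {q c D : ℝ} {N : ℕ} (hq0 : 0 < q) (hq1 : q < 1) (hc : 0 < c)
    (hN : logb (1 / q) (max 1 (D / c)) ≤ N) : q ^ N * D ≤ c := by
  rw [logb_le_iff_le_rpow (one_lt_one_div hq0 hq1) (by positivity), rpow_natCast, div_pow,
    one_pow] at hN
  have hD : D / c ≤ 1 / q ^ N := (le_max_right _ _).trans hN
  rw [div_le_div_iff₀ hc (pow_pos hq0 N)] at hD
  linarith

noncomputable def bregman (f : ℝ → ℝ) (β α : ℝ) : ℝ := deriv f α * (β - α) + f α - f β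

noncomputable def newtonStep (f : ℝ → ℝ) (b x : ℝ) : ℝ := x + (b - f x) / deriv f x

section NewtonStep

variable {f : ℝ → ℝ} {b x β ε : ℝ}

lemma deriv_mul_newtonStep_sub (hx : deriv f x ≠ 0) :
    deriv f x * (newtonStep f b x - x) = b - f x := by
  rw [newtonStep, add_sub_cancel_left, mul_div_cancel₀ _ hx]

lemma le_newtonStep (hx : 0 < deriv f x) (hb : f x ≤ b) : x ≤ newtonStep f b x :=
  le_add_of_nonneg_right (div_nonneg (sub_nonneg.2 hb) hx.le)

lemma lt_newtonStep (hx : 0 < deriv f x) (hb : f x < b) : x < newtonStep f b x :=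
  lt_add_of_pos_right x (div_pos (sub_pos.2 hb) hx)

lemma apply_newtonStep_le (hconc : ConcaveOn ℝ univ f) (hdiff : DifferentiableAt ℝ f x)
    (hx : deriv f x ≠ 0) : f (newtonStep f b x) ≤ b := by
  have := hconc.le_add_deriv_mul_sub (mem_univ x) (mem_univ (newtonStep f b x)) hdiff
  rwa [deriv_mul_newtonStep_sub hx, add_sub_cancel] at this

lemma bregman_eq_deriv_mul_sub_newtonStep (hx : deriv f x ≠ 0) :
    bregman f β x = deriv f x * (β - newtonStep f b x) + (b - f β) := by
  have := deriv_mul_newtonStep_sub (b := b) hx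
  rw [bregman]
  linear_combination this

lemma apply_le_apply_newtonStep_of_bregman_le (hf : Monotone f) (hx : 0 < deriv f x)
    (h : bregman f β x ≤ b - f β) : f β ≤ f (newtonStep f b x) := by
  rw [bregman_eq_deriv_mul_sub_newtonStep (b := b) hx.ne'] at h
  refine hf (sub_nonpos.1 ?_)
  exact nonpos_of_mul_nonpos_right (by linarith) hx

lemma deriv_newtonStep_le (hconc : ConcaveOn ℝ univ f)
    (hdiff : DifferentiableAt ℝ f (newtonStep f b x)) (hx : 0 < deriv f x) (hb : f x < b)
    (hslow : ε * (b - f x) ≤ b - f (newtonStep f b x)) :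
    deriv f (newtonStep f b x) ≤ (1 - ε) * deriv f x := by
  set y := newtonStep f b x
  have hxy : 0 < y - x := sub_pos.2 (lt_newtonStep hx hb)
  have hsecant := hconc.deriv_le_slope (mem_univ x) (mem_univ y) (lt_newtonStep hx hb) hdiff
  rw [slope_def_field, le_div_iff₀ hxy] at hsecant
  have hstep := deriv_mul_newtonStep_sub (b := b) hx.ne'
  refine le_of_mul_le_mul_right ?_ hxy
  linear_combination hsecant + hslow - (1 - ε) * hstep

lemma bregman_newtonStep_le (hf : Monotone f) (hconc : ConcaveOn ℝ univ f)
    (hdiff : DifferentiableAt ℝ f (newtonStep f b x)) (hx : 0 < deriv f x) (hb : f x < b)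
    (hβ : f (newtonStep f b x) < f β) (hβb : f β ≤ b) (hε : ε ≤ 1)
    (hslow : ε * (b - f x) ≤ b - f (newtonStep f b x)) :
    bregman f β (newtonStep f b x) ≤ (1 - ε) * bregman f β x := by
  set y := newtonStep f b x
  have hyβ : 0 ≤ β - y := sub_nonneg.2 (hf.reflect_lt hβ).le
  have hderiv := deriv_newtonStep_le hconc hdiff hx hb hslow
  calc bregman f β y ≤ deriv f y * (β - y) := by rw [bregman]; linarith
    _ ≤ (1 - ε) * deriv f x * (β - y) := mul_le_mul_of_nonneg_right hderiv hyβ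
    _ = (1 - ε) * (bregman f β x - (b - f β)) := by
      rw [bregman_eq_deriv_mul_sub_newtonStep (b := b) hx.ne']; ring
    _ ≤ (1 - ε) * bregman f β x := by nlinarith

end NewtonStep

namespace NewtonDinkelbach

variable {f : ℝ → ℝ} {b β ε : ℝ} {a : ℕ → ℝ}
  (hconc : ConcaveOn ℝ univ f) (hdiff : Differentiable ℝ f) (hder : ∀ x, 0 < deriv f x)
  (harec : ∀ t, a (t + 1) = newtonStep f b (a t)) (h0 : f (a 0) ≤ b)
include hconc hdiff hder harec h0

lemma apply_le_target (t : ℕ) : f (a t) ≤ b := by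
  cases t with
  | zero => exact h0
  | succ t => rw [harec]; exact apply_newtonStep_le hconc (hdiff _) (hder _).ne'

lemma monotone_apply : Monotone (f ∘ a) :=
  (strictMono_of_deriv_pos hder).monotone.comp <| monotone_nat_of_le_succ fun t => by
    rw [harec]; exact le_newtonStep (hder _) (apply_le_target hconc hdiff hder harec h0 t)

lemma bregman_le_pow_mul (hε0 : 0 ≤ ε) (hε1 : ε ≤ 1) (hβb : f β ≤ b)
    (hslow : ε * (b - f (a 0)) ≤ b - f β) {t : ℕ} (hbelow : ∀ s < t, f (a (s + 1)) < f β) :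
    bregman f β (a t) ≤ (1 - ε) ^ t * bregman f β (a 0) := by
  induction t with
  | zero => simp
  | succ t ih =>
    have hmono := monotone_apply hconc hdiff hder harec h0
    have hβt := hbelow t (Nat.lt_succ_self t)
    have hrise : f (a t) ≤ f (a (t + 1)) := hmono (Nat.le_succ t)
    have hfirst : f (a 0) ≤ f (a t) := hmono (Nat.zero_le t)
    rw [harec] at hβt hrise ⊢
    have hdecay := bregman_newtonStep_le (strictMono_of_deriv_pos hder).monotone hconc (hdiff _)
      (hder _) (by linarith) hβt hβb hε1 (by nlinarith)
    calc bregman f β (newtonStep f b (a t)) ≤ (1 - ε) * bregman f β (a t) := hdecay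
      _ ≤ (1 - ε) * ((1 - ε) ^ t * bregman f β (a 0)) :=
        mul_le_mul_of_nonneg_left (ih fun s hs => hbelow s (hs.trans (Nat.lt_succ_self t)))
          (sub_nonneg.2 hε1)
      _ = (1 - ε) ^ (t + 1) * bregman f β (a 0) := by ring

lemma exists_le_succ_le_apply (hε0 : 0 ≤ ε) (hε1 : ε ≤ 1) (hβb : f β ≤ b)
    (hslow : ε * (b - f (a 0)) ≤ b - f β) {N : ℕ}
    (hN : (1 - ε) ^ N * bregman f β (a 0) ≤ b - f β) :
    ∃ t ≤ N + 1, f β ≤ f (a t) := by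
  by_contra! hbelow
  have hD := bregman_le_pow_mul hconc hdiff hder harec h0 hε0 hε1 hβb hslow
    (t := N) fun s hs => hbelow (s + 1) (by omega)
  have hreach := apply_le_apply_newtonStep_of_bregman_le (strictMono_of_deriv_pos hder).monotone
    (hder (a N)) (hD.trans hN)
  rw [← harec] at hreach
  exact (hbelow (N + 1) le_rfl).not_ge hreach

end NewtonDinkelbach

/-- Convergence of the Newton–Dinkelbach method for a differentiable, strictly
increasing, concave function `f`: starting from `α₀` with `f(α₀) ≤ b`, the iterates
`α_{t+1} = α_t + (b − f(α_t))/f'(α_t)` reach a point with `b' ≤ f(α_t) ≤ b` within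
`T = 1 + ⌈log_{1/(1−ε)}(max{1, D_f(α_*|α₀)/(b−b')})⌉` steps, where `f(α_*) = b'`,
`ε ∈ (0,1)` satisfies `ε(b − f(α₀)) ≤ b − b'`, and
`D_f(β|α) = f'(α)(β−α) + f(α) − f(β)` is the Bregman divergence of `f`. -/
theorem newton_dinkelbach {f : ℝ → ℝ}
    (hdiff : Differentiable ℝ f) (hconc : ConcaveOn ℝ Set.univ f)
    (hder : ∀ α : ℝ, 0 < deriv f α)
    (b' b : ℝ) (hbb : b' < b)
    (αstar : ℝ) (hαstar : f αstar = b')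
    (α₀ : ℝ) (hα₀ : f α₀ ≤ b)
    (a : ℕ → ℝ) (ha0 : a 0 = α₀)
    (harec : ∀ t : ℕ, a (t + 1) = a t + (b - f (a t)) / deriv f (a t))
    (ε : ℝ) (hε0 : 0 < ε) (hε1 : ε < 1)
    (hεb : ε * (b - f α₀) ≤ b - b') :
    ∃ t : ℕ, (t : ℝ) ≤ 1 +
        (⌈Real.logb (1 / (1 - ε))
          (max 1 ((deriv f α₀ * (αstar - α₀) + f α₀ - f αstar) / (b - b')))⌉ : ℤ) ∧
      b' ≤ f (a t) ∧ f (a t) ≤ b := by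
  subst hαstar ha0
  have hq : 0 < 1 - ε := by linarith
  obtain ⟨N, hN⟩ := Int.eq_ofNat_of_zero_le <| Int.ceil_nonneg <|
    logb_nonneg (one_lt_one_div hq (by linarith)) (le_max_left 1
      (bregman f αstar (a 0) / (b - f αstar)))
  have hdecay : (1 - ε) ^ N * bregman f αstar (a 0) ≤ b - f αstar :=
    pow_mul_le_of_logb_le hq (by linarith) (sub_pos.2 hbb) (by exact_mod_cast hN ▸ Int.le_ceil _)
  obtain ⟨t, htN, hreach⟩ := NewtonDinkelbach.exists_le_succ_le_apply hconc hdiff hder harec hα₀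
    hε0.le hε1.le hbb.le hεb hdecay
  refine ⟨t, ?_, hreach, NewtonDinkelbach.apply_le_target hconc hdiff hder harec hα₀ t⟩
  rw [bregman] at hN
  rw [hN]
  exact_mod_cast htN.trans_eq (add_comm N 1)
end

section
/- For a linear subspace W ⊆ ℝ^n and T ⊆ [n], define ρ_T(W) := sup over nonzero y ∈ {w|_T : w ∈ W} of (inf over w ∈ W with w|_T = y of ‖w|_{T^c}‖_2²) / ‖y‖_2², where w|_S denotes the restriction of w to coordinates in S. Then for any positive z ∈ ℝ^n and any T ⊆ [n], ρ_T(√z ∘ W) ≤ (max_{j∉T} z_j / min_{j∈T} z_j) · ρ_T(W), where √z ∘ W := {(√(z_j) w_j)_{j∈[n]} : w ∈ W}. In particular, for a frame U ∈ ℝ^{d×n} with row space W = im(U^T), one has ρ_T(U√Z) ≤ (max_{j∉T} z_j / min_{j∈T} z_j) · ρ_T(U), where ρ_T(U) := ρ_T(im(U^T)). -/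
/-!
Scaling coordinate `j` by `s j` maps the extensions of `y` in `W` bijectively onto the
extensions of the scaled `y` in the scaled subspace. This multiplies the lifting cost
`‖w|_{Tᶜ}‖²` by at most `M ≥ max_{j ∉ T} s j ^ 2` and the norm `‖y‖²` by at least
`m ≤ min_{j ∈ T} s j ^ 2`, so every ratio in the scaled supremum is at most `M / m` times a
ratio in the original one. Since `sSup` of an unbounded set of reals is `0`, boundedness must
also be transferred; it follows from the same comparison applied to the inverse scaling.
-/

open Matrix BigOperators

/-- The lifting condition measure of a subspace `W ⊆ ℝ^n` with respect to `T ⊆ [n]`: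
`ρ_T(W) = sup` over nonzero restrictions `y = w₀|_T` (`w₀ ∈ W`) of
`(inf over w ∈ W with w|_T = y of ‖w|_{Tᶜ}‖²)/‖y‖²`. -/
noncomputable def rhoT {n : ℕ} (W : Submodule ℝ (Fin n → ℝ)) (T : Finset (Fin n)) : ℝ :=
  sSup {r : ℝ | ∃ w₀ ∈ W, (∃ j ∈ T, w₀ j ≠ 0) ∧
    r = sInf {s : ℝ | ∃ w ∈ W, (∀ j ∈ T, w j = w₀ j) ∧ s = ∑ j ∈ Tᶜ, (w j) ^ 2}
        / (∑ j ∈ T, (w₀ j) ^ 2)}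

lemma bddAbove_of_forall_exists_le_mul {S S' : Set ℝ} {c : ℝ} (hc : 0 ≤ c)
    (h : ∀ r ∈ S, ∃ r' ∈ S', r ≤ c * r') (hS' : BddAbove S') : BddAbove S := by
  obtain ⟨b, hb⟩ := hS'
  refine ⟨c * b, fun r hr => ?_⟩
  obtain ⟨r', hr', hle⟩ := h r hr
  exact hle.trans (mul_le_mul_of_nonneg_left (hb hr') hc)

lemma sSup_le_mul_sSup_of_forall_exists_le_mul {S S' : Set ℝ} {c : ℝ} (hc : 0 ≤ c)
    (hS : ∀ r ∈ S, 0 ≤ r) (h : ∀ r' ∈ S', ∃ r ∈ S, r' ≤ c * r)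
    (hbdd : BddAbove S' → BddAbove S) : sSup S' ≤ c * sSup S := by
  by_cases hS_bdd : BddAbove S
  · refine Real.sSup_le (fun r' hr' => ?_) (mul_nonneg hc (Real.sSup_nonneg hS))
    obtain ⟨r, hr, hle⟩ := h r' hr'
    exact hle.trans (mul_le_mul_of_nonneg_left (le_csSup hS_bdd hr) hc)
  · rw [Real.sSup_of_not_bddAbove hS_bdd, Real.sSup_of_not_bddAbove (mt hbdd hS_bdd),
      mul_zero]

lemma exists_pos_le_sq_of_ne_zero {ι : Type*} [Finite ι] (s : ι → ℝ)
    (hs : ∀ i, s i ≠ 0) :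
    ∃ m, 0 < m ∧ ∀ i, m ≤ s i ^ 2 := by
  cases isEmpty_or_nonempty ι
  · exact ⟨1, one_pos, isEmptyElim⟩
  · obtain ⟨i₀, hi₀⟩ := Finite.exists_min fun i => s i ^ 2
    exact ⟨s i₀ ^ 2, sq_pos_of_ne_zero (hs i₀), hi₀⟩

section Diagonal

variable {n : ℕ}

lemma mulVecLin_diagonal_apply (s w : Fin n → ℝ) (j : Fin n) :
    (diagonal s).mulVecLin w j = s j * w j := by
  simp [mulVec_diagonal]

lemma map_mulVecLin_diagonal_inv_map {s : Fin n → ℝ} (hs : ∀ j, s j ≠ 0)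
    (W : Submodule ℝ (Fin n → ℝ)) :
    (W.map (diagonal s).mulVecLin).map (diagonal s⁻¹).mulVecLin = W := by
  have hone : (fun j => s⁻¹ j * s j) = fun _ => 1 := funext fun j => inv_mul_cancel₀ (hs j)
  rw [← Submodule.map_comp, ← mulVecLin_mul, diagonal_mul_diagonal, hone, diagonal_one,
    mulVecLin_one, Submodule.map_id]

end Diagonal

section Lifting

variable {n : ℕ} (W : Submodule ℝ (Fin n → ℝ)) (T : Finset (Fin n))

def extensionCosts (w₀ : Fin n → ℝ) : Set ℝ :=
  {s | ∃ w ∈ W, (∀ j ∈ T, w j = w₀ j) ∧ s = ∑ j ∈ Tᶜ, (w j) ^ 2}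

def rhoSet : Set ℝ :=
  {r | ∃ w₀ ∈ W, (∃ j ∈ T, w₀ j ≠ 0) ∧
    r = sInf (extensionCosts W T w₀) / ∑ j ∈ T, (w₀ j) ^ 2}

lemma rhoT_eq_sSup_rhoSet : rhoT W T = sSup (rhoSet W T) := rfl

lemma bddBelow_extensionCosts (w₀ : Fin n → ℝ) : BddBelow (extensionCosts W T w₀) :=
  ⟨0, by rintro _ ⟨w, -, -, rfl⟩; positivity⟩

lemma sInf_extensionCosts_nonneg (w₀ : Fin n → ℝ) : 0 ≤ sInf (extensionCosts W T w₀) :=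
  Real.sInf_nonneg (by rintro _ ⟨w, -, -, rfl⟩; positivity)

lemma rhoSet_nonneg : ∀ r ∈ rhoSet W T, 0 ≤ r := by
  rintro _ ⟨w₀, -, -, rfl⟩
  exact div_nonneg (sInf_extensionCosts_nonneg W T w₀) (by positivity)

variable {W T}

lemma sInf_extensionCosts_map_diagonal_le {s : Fin n → ℝ} {M : ℝ} (hM : 0 ≤ M)
    (hsM : ∀ j ∈ Tᶜ, s j ^ 2 ≤ M) {w₀ : Fin n → ℝ} (hw₀ : w₀ ∈ W) :
    sInf (extensionCosts (W.map (diagonal s).mulVecLin) T ((diagonal s).mulVecLin w₀))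
      ≤ M * sInf (extensionCosts W T w₀) := by
  have hne : (extensionCosts W T w₀).Nonempty := ⟨_, w₀, hw₀, fun _ _ => rfl, rfl⟩
  rw [← smul_eq_mul, ← Real.sInf_smul_of_nonneg hM]
  refine le_csInf hne.smul_set ?_
  rintro _ ⟨_, ⟨w, hw, hwT, rfl⟩, rfl⟩
  have hmem : ∑ j ∈ Tᶜ, ((diagonal s).mulVecLin w j) ^ 2
      ∈ extensionCosts (W.map (diagonal s).mulVecLin) T ((diagonal s).mulVecLin w₀) :=
    ⟨_, ⟨w, hw, rfl⟩, fun j hj => by simp only [mulVecLin_diagonal_apply, hwT j hj], rfl⟩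
  calc sInf _ ≤ ∑ j ∈ Tᶜ, ((diagonal s).mulVecLin w j) ^ 2 :=
        csInf_le (bddBelow_extensionCosts _ _ _) hmem
    _ = ∑ j ∈ Tᶜ, s j ^ 2 * w j ^ 2 := by simp only [mulVecLin_diagonal_apply, mul_pow]
    _ ≤ ∑ j ∈ Tᶜ, M * w j ^ 2 :=
        Finset.sum_le_sum fun j hj => mul_le_mul_of_nonneg_right (hsM j hj) (sq_nonneg _)
    _ = M • ∑ j ∈ Tᶜ, w j ^ 2 := by rw [smul_eq_mul, Finset.mul_sum]

lemma exists_le_mul_of_mem_rhoSet_map_diagonal {s : Fin n → ℝ} {M m : ℝ} (hM : 0 ≤ M)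
    (hm : 0 < m) (hsM : ∀ j ∈ Tᶜ, s j ^ 2 ≤ M) (hms : ∀ j ∈ T, m ≤ s j ^ 2) :
    ∀ r' ∈ rhoSet (W.map (diagonal s).mulVecLin) T, ∃ r ∈ rhoSet W T, r' ≤ M / m * r := by
  rintro _ ⟨_, ⟨w₀, hw₀, rfl⟩, ⟨j₀, hj₀, hsw₀⟩, rfl⟩
  rw [mulVecLin_diagonal_apply] at hsw₀
  have hw₀j₀ : w₀ j₀ ≠ 0 := right_ne_zero_of_mul hsw₀
  refine ⟨_, ⟨w₀, hw₀, ⟨j₀, hj₀, hw₀j₀⟩, rfl⟩, ?_⟩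
  have hnorm_pos : 0 < ∑ j ∈ T, w₀ j ^ 2 :=
    (sq_pos_of_ne_zero hw₀j₀).trans_le
      (Finset.single_le_sum (fun j _ => sq_nonneg (w₀ j)) hj₀)
  have hnorm_le :
      m * ∑ j ∈ T, w₀ j ^ 2 ≤ ∑ j ∈ T, ((diagonal s).mulVecLin w₀ j) ^ 2 := by
    rw [Finset.mul_sum]
    refine Finset.sum_le_sum fun j hj => ?_
    rw [mulVecLin_diagonal_apply, mul_pow]
    exact mul_le_mul_of_nonneg_right (hms j hj) (sq_nonneg _)
  rw [div_mul_div_comm]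
  exact div_le_div₀ (mul_nonneg hM (sInf_extensionCosts_nonneg W T w₀))
    (sInf_extensionCosts_map_diagonal_le hM hsM hw₀) (mul_pos hm hnorm_pos) hnorm_le

lemma bddAbove_rhoSet_of_map_diagonal {s : Fin n → ℝ} (hs : ∀ j, s j ≠ 0)
    (h : BddAbove (rhoSet (W.map (diagonal s).mulVecLin) T)) : BddAbove (rhoSet W T) := by
  obtain ⟨m, hm, hms⟩ := exists_pos_le_sq_of_ne_zero s⁻¹ fun j => inv_ne_zero (hs j)
  have hsM : ∀ j ∈ Tᶜ, s⁻¹ j ^ 2 ≤ ∑ i, s⁻¹ i ^ 2 := fun j _ =>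
    Finset.single_le_sum (fun i _ => sq_nonneg (s⁻¹ i)) (Finset.mem_univ j)
  have hM : 0 ≤ ∑ i, s⁻¹ i ^ 2 := Finset.sum_nonneg fun i _ => sq_nonneg _
  have hcompare :=
    exists_le_mul_of_mem_rhoSet_map_diagonal (W := W.map (diagonal s).mulVecLin) hM hm hsM
      fun j _ => hms j
  rw [map_mulVecLin_diagonal_inv_map hs] at hcompare
  exact bddAbove_of_forall_exists_le_mul (div_nonneg hM hm.le) hcompare h

theorem rhoT_map_diagonal_le {s : Fin n → ℝ} (hs : ∀ j, s j ≠ 0) {M m : ℝ} (hM : 0 ≤ M)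
    (hm : 0 < m) (hsM : ∀ j ∈ Tᶜ, s j ^ 2 ≤ M) (hms : ∀ j ∈ T, m ≤ s j ^ 2) :
    rhoT (W.map (diagonal s).mulVecLin) T ≤ M / m * rhoT W T := by
  rw [rhoT_eq_sSup_rhoSet, rhoT_eq_sSup_rhoSet]
  exact sSup_le_mul_sSup_of_forall_exists_le_mul (div_nonneg hM hm.le) (rhoSet_nonneg W T)
    (exists_le_mul_of_mem_rhoSet_map_diagonal hM hm hsM hms)
    (bddAbove_rhoSet_of_map_diagonal hs)

end Lifting

/-- Scaling bound for the condition measure: for any positive `z`,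
`ρ_T(√z ∘ W) ≤ (max_{j∉T} z_j / min_{j∈T} z_j)·ρ_T(W)`; in particular, for a frame `U`
with row space `im(Uᵀ)`, `ρ_T(U√Z) ≤ (max_{j∉T} z_j / min_{j∈T} z_j)·ρ_T(U)`. -/
theorem rhoT_scaling {n : ℕ} (z : Fin n → ℝ) (hz : ∀ j, 0 < z j)
    (T : Finset (Fin n)) (hT : T.Nonempty) (hTc : Tᶜ.Nonempty) :
    (∀ W : Submodule ℝ (Fin n → ℝ),
      rhoT (W.map (Matrix.diagonal fun j => Real.sqrt (z j)).mulVecLin) T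
        ≤ (Tᶜ.sup' hTc z / T.inf' hT z) * rhoT W T) ∧
    (∀ (d : ℕ) (U : Matrix (Fin d) (Fin n) ℝ), U.rank = d →
      rhoT (LinearMap.range ((U * Matrix.diagonal fun j => Real.sqrt (z j))ᵀ).mulVecLin) T
        ≤ (Tᶜ.sup' hTc z / T.inf' hT z) * rhoT (LinearMap.range (Uᵀ).mulVecLin) T) := by
  have hsq : ∀ j, Real.sqrt (z j) ^ 2 = z j := fun j => Real.sq_sqrt (hz j).le
  have hM : 0 ≤ Tᶜ.sup' hTc z := (hz _).le.trans (Finset.le_sup' z hTc.choose_spec)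
  have hm : 0 < T.inf' hT z := (Finset.lt_inf'_iff hT).2 fun j _ => hz j
  have hscale : ∀ W : Submodule ℝ (Fin n → ℝ),
      rhoT (W.map (diagonal fun j => Real.sqrt (z j)).mulVecLin) T
        ≤ (Tᶜ.sup' hTc z / T.inf' hT z) * rhoT W T := fun W =>
    rhoT_map_diagonal_le (fun j => (Real.sqrt_pos.2 (hz j)).ne') hM hm
      (fun j hj => (hsq j).trans_le (Finset.le_sup' z hj))
      (fun j hj => (Finset.inf'_le z hj).trans_eq (hsq j).symm)
  refine ⟨hscale, fun d U _ => ?_⟩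
  rw [transpose_mul, diagonal_transpose, mulVecLin_mul, LinearMap.range_comp]
  exact hscale _
end

section
/- Let U ∈ ℝ^{d×n} be a frame and define ρ(U) := max_{T⊆[n]} ρ_T(U), where ρ_T(U) := sup over nonzero y ∈ {w|_T : w ∈ im(U^T)} of (inf over w ∈ im(U^T) with w|_T = y of ‖w|_{T^c}‖_2²)/‖y‖_2². Then for every positive z ∈ ℝ^n and every 0 < δ ≤ 1, there exists a positive ẑ ∈ ℝ^n such that ‖lev^U(z) − lev^U(ẑ)‖_1 ≤ 2nd·δ and ẑ_max / ẑ_min ≤ (max{ρ(U), 1} / δ)^n, where ẑ_max and ẑ_min are the largest and smallest entries of ẑ. -/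
open Matrix BigOperators

/-- The condition measure of a frame: `ρ(U) = max_{T⊆[n]} ρ_T(im(Uᵀ))`. -/
noncomputable def rho {d n : ℕ} (U : Matrix (Fin d) (Fin n) ℝ) : ℝ :=
  ⨆ T : Finset (Fin n), rhoT (LinearMap.range (Uᵀ).mulVecLin) T

/-!
Leverage scores are the squared lengths of the projections of the coordinate vectors onto the
reweighted row space `√Z · im Uᵀ`, so they always sum to `d`. Multiplying the weights outside a
set `T` by `γ ≥ 1` lowers every score on `T` and raises every score off `T`, so the `ℓ¹` change is
twice the gain off `T`. Off `T` the scores always add up to at least the dimension of the part of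
the subspace vanishing on `T`, and after the rescaling they exceed it by at most `dδ` as soon as
`ρ_T` times the largest weight off `T` is at most `δ` times the smallest weight on `T`: a vector
orthogonal to that part has, among the vectors of the subspace with the same restriction to `T`,
the least weighted mass off `T`, and `ρ_T` bounds the unweighted mass of such lifts.
Sorting the weights and closing, one after the other, each of the at most `n` consecutive gaps
larger than `κ = max(ρ, 1)/δ` down to exactly `κ` gives the result.
-/

open scoped RealInnerProductSpace

noncomputable section

theorem Submodule.starProjection_inf_orthogonal {𝕜 E : Type*} [RCLike 𝕜] [NormedAddCommGroup E]
    [InnerProductSpace 𝕜 E] {K₀ K : Submodule 𝕜 E} [K₀.HasOrthogonalProjection]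
    [K.HasOrthogonalProjection] [(K ⊓ K₀ᗮ).HasOrthogonalProjection] (h : K₀ ≤ K) (x : E) :
    (K ⊓ K₀ᗮ).starProjection x = K.starProjection x - K₀.starProjection x := by
  refine Submodule.eq_starProjection_of_mem_of_inner_eq_zero (Submodule.mem_inf.mpr ⟨?_, ?_⟩)
    fun w hw => ?_
  · exact K.sub_mem (K.starProjection_apply_mem x) (h (K₀.starProjection_apply_mem x))
  · have := K₀ᗮ.sub_mem (K₀.sub_starProjection_mem_orthogonal x)
      (Submodule.orthogonal_le h (K.sub_starProjection_mem_orthogonal x))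
    rwa [sub_sub_sub_cancel_left] at this
  · rw [sub_sub_eq_add_sub, add_sub_right_comm, inner_add_left,
      Submodule.starProjection_inner_eq_zero x w hw.1,
      Submodule.inner_right_of_mem_orthogonal (K₀.starProjection_apply_mem x) hw.2, add_zero]

theorem LinearMap.exists_lift_norm_le {E F G : Type*} [AddCommGroup E] [Module ℝ E]
    [FiniteDimensional ℝ E] [NormedAddCommGroup F] [NormedSpace ℝ F] [NormedAddCommGroup G]
    [NormedSpace ℝ G] (f : E →ₗ[ℝ] F) (g : E →ₗ[ℝ] G) :
    ∃ C, ∀ x, ∃ y, f y = f x ∧ ‖g y‖ ≤ C * ‖f x‖ := by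
  obtain ⟨h, hh⟩ := f.rangeRestrict.exists_rightInverse_of_surjective f.range_rangeRestrict
  let φ := LinearMap.toContinuousLinearMap (g ∘ₗ h)
  refine ⟨‖φ‖, fun x => ⟨h (f.rangeRestrict x), ?_, φ.le_opNorm (f.rangeRestrict x)⟩⟩
  simpa using congrArg Subtype.val (LinearMap.congr_fun hh (f.rangeRestrict x))

section Euclidean

variable {ι : Type*}

def vanishingOn (T : Finset ι) : Submodule ℝ (EuclideanSpace ℝ ι) where
  carrier := {v | ∀ j ∈ T, v j = 0}
  add_mem' hv hw j hj := by simp [hv j hj, hw j hj]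
  zero_mem' j _ := rfl
  smul_mem' c v hv j hj := by simp [hv j hj]

lemma mem_vanishingOn {T : Finset ι} {v : EuclideanSpace ℝ ι} :
    v ∈ vanishingOn T ↔ ∀ j ∈ T, v j = 0 := Iff.rfl

def restrictTo [DecidableEq ι] (S : Finset ι) : (ι → ℝ) →ₗ[ℝ] EuclideanSpace ℝ ι where
  toFun w := WithLp.toLp 2 fun j => if j ∈ S then w j else 0
  map_add' v w := by ext j; by_cases hj : j ∈ S <;> simp [hj]
  map_smul' c w := by ext j; by_cases hj : j ∈ S <;> simp [hj]

variable [Fintype ι]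

lemma EuclideanSpace.norm_sq_eq_sum (v : EuclideanSpace ℝ ι) : ‖v‖ ^ 2 = ∑ j, v j ^ 2 := by
  simp [EuclideanSpace.norm_sq_eq]

lemma sum_sq_stdOrthonormalBasis (K : Submodule ℝ (EuclideanSpace ℝ ι)) (i) :
    ∑ j, (stdOrthonormalBasis ℝ K i : EuclideanSpace ℝ ι) j ^ 2 = 1 := by
  rw [← EuclideanSpace.norm_sq_eq_sum, Submodule.norm_coe, (stdOrthonormalBasis ℝ K).norm_eq_one,
    one_pow]

variable [DecidableEq ι]

lemma EuclideanSpace.inner_single_one_left (j : ι) (v : EuclideanSpace ℝ ι) :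
    ⟪EuclideanSpace.single j 1, v⟫ = v j := by
  simp [EuclideanSpace.inner_single_left]

lemma norm_restrictTo_sq (S : Finset ι) (w : ι → ℝ) :
    ‖restrictTo S w‖ ^ 2 = ∑ j ∈ S, w j ^ 2 := by
  simp [restrictTo, EuclideanSpace.norm_sq_eq_sum]

def leverage (K : Submodule ℝ (EuclideanSpace ℝ ι)) (j : ι) : ℝ :=
  ‖K.starProjection (EuclideanSpace.single j 1)‖ ^ 2

variable {K : Submodule ℝ (EuclideanSpace ℝ ι)} {s : ι → ℝ}

lemma leverage_nonneg (K : Submodule ℝ (EuclideanSpace ℝ ι)) (j : ι) : 0 ≤ leverage K j := by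
  unfold leverage; positivity

lemma leverage_eq_apply (K : Submodule ℝ (EuclideanSpace ℝ ι)) (j : ι) :
    leverage K j = K.starProjection (EuclideanSpace.single j 1) j := by
  rw [leverage, ← real_inner_self_eq_norm_sq, Submodule.inner_starProjection_left_eq_right,
    Submodule.starProjection_eq_self_iff.mpr (K.starProjection_apply_mem _),
    EuclideanSpace.inner_single_one_left]

lemma sq_apply_le_leverage_mul {v : EuclideanSpace ℝ ι} (hv : v ∈ K) (j : ι) :
    v j ^ 2 ≤ leverage K j * ‖v‖ ^ 2 := by
  have hvj : v j = ⟪K.starProjection (EuclideanSpace.single j 1), v⟫ := by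
    rw [Submodule.inner_starProjection_left_eq_right, Submodule.starProjection_eq_self_iff.mpr hv,
      EuclideanSpace.inner_single_one_left]
  rw [hvj, leverage, ← real_inner_self_eq_norm_sq, ← real_inner_self_eq_norm_sq, sq]
  exact real_inner_mul_inner_self_le _ _

lemma leverage_eq_sum_sq (K : Submodule ℝ (EuclideanSpace ℝ ι)) (j : ι) :
    leverage K j = ∑ i, (stdOrthonormalBasis ℝ K i : EuclideanSpace ℝ ι) j ^ 2 := by
  rw [leverage, Submodule.starProjection_apply, Submodule.norm_coe,
    ← (stdOrthonormalBasis ℝ K).sum_sq_inner_right]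
  refine Finset.sum_congr rfl fun i _ => ?_
  rw [Submodule.inner_orthogonalProjectionOnto_eq_of_mem_left, real_inner_comm,
    EuclideanSpace.inner_single_one_left]

theorem sum_leverage (K : Submodule ℝ (EuclideanSpace ℝ ι)) :
    ∑ j, leverage K j = Module.finrank ℝ K := by
  simp_rw [leverage_eq_sum_sq]
  rw [Finset.sum_comm]
  simp [sum_sq_stdOrthonormalBasis]

theorem sum_leverage_le {S : Finset ι} {c : ℝ}
    (h : ∀ v ∈ K, ∑ j ∈ S, v j ^ 2 ≤ c * ‖v‖ ^ 2) :
    ∑ j ∈ S, leverage K j ≤ c * Module.finrank ℝ K := by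
  simp_rw [leverage_eq_sum_sq]
  rw [Finset.sum_comm]
  calc ∑ i, ∑ j ∈ S, (stdOrthonormalBasis ℝ K i : EuclideanSpace ℝ ι) j ^ 2
      ≤ ∑ _i : Fin (Module.finrank ℝ K), c := by
        refine Finset.sum_le_sum fun i _ => ?_
        have := h _ (stdOrthonormalBasis ℝ K i).2
        rwa [Submodule.norm_coe, (stdOrthonormalBasis ℝ K).norm_eq_one, one_pow, mul_one] at this
    _ = c * Module.finrank ℝ K := by simp [mul_comm]

theorem leverage_eq_add_leverage_inf_orthogonal {K₀ : Submodule ℝ (EuclideanSpace ℝ ι)}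
    (h : K₀ ≤ K) (j : ι) : leverage K j = leverage K₀ j + leverage (K ⊓ K₀ᗮ) j := by
  have hsplit := Submodule.starProjection_inf_orthogonal h (EuclideanSpace.single j 1)
  rw [eq_sub_iff_add_eq'] at hsplit
  rw [leverage, leverage, leverage, ← hsplit, norm_add_sq_real,
    Submodule.inner_right_of_mem_orthogonal (K₀.starProjection_apply_mem _)
      (Submodule.mem_inf.mp ((K ⊓ K₀ᗮ).starProjection_apply_mem _)).2]
  ring

theorem sum_compl_leverage_of_le_vanishingOn {T : Finset ι} (hK : K ≤ vanishingOn T) :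
    ∑ j ∈ Tᶜ, leverage K j = Module.finrank ℝ K := by
  have hT : ∑ j ∈ T, leverage K j = 0 := Finset.sum_eq_zero fun j hj => by
    rw [leverage_eq_apply]; exact hK (K.starProjection_apply_mem _) j hj
  rw [← sum_leverage, ← Finset.sum_add_sum_compl T, hT, zero_add]

theorem finrank_inf_vanishingOn_le_sum_compl_leverage (K : Submodule ℝ (EuclideanSpace ℝ ι))
    (T : Finset ι) : (Module.finrank ℝ ↥(K ⊓ vanishingOn T) : ℝ) ≤ ∑ j ∈ Tᶜ, leverage K j := by
  rw [← sum_compl_leverage_of_le_vanishingOn (K := K ⊓ vanishingOn T) inf_le_right]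
  refine Finset.sum_le_sum fun j _ => ?_
  rw [leverage_eq_add_leverage_inf_orthogonal (inf_le_left : K ⊓ vanishingOn T ≤ K) j]
  exact le_add_of_nonneg_right (leverage_nonneg _ _)

theorem sum_compl_leverage_le {T : Finset ι} {δ : ℝ} (hδ : 0 ≤ δ)
    (h : ∀ v ∈ K ⊓ (K ⊓ vanishingOn T)ᗮ, ∑ j ∈ Tᶜ, v j ^ 2 ≤ δ * ‖v‖ ^ 2) :
    ∑ j ∈ Tᶜ, leverage K j
      ≤ Module.finrank ℝ ↥(K ⊓ vanishingOn T) + δ * Module.finrank ℝ K := by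
  simp_rw [leverage_eq_add_leverage_inf_orthogonal (inf_le_left : K ⊓ vanishingOn T ≤ K)]
  rw [Finset.sum_add_distrib,
    sum_compl_leverage_of_le_vanishingOn (K := K ⊓ vanishingOn T) inf_le_right]
  gcongr
  refine (sum_leverage_le h).trans (mul_le_mul_of_nonneg_left ?_ hδ)
  exact_mod_cast Submodule.finrank_mono inf_le_left

theorem sum_compl_sq_le_of_mem_orthogonal {T : Finset ι} {v v' : EuclideanSpace ℝ ι}
    (hvK : v ∈ K) (hv : v ∈ (K ⊓ vanishingOn T)ᗮ) (hv'K : v' ∈ K) (hagree : ∀ j ∈ T, v' j = v j) :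
    ∑ j ∈ Tᶜ, v j ^ 2 ≤ ∑ j ∈ Tᶜ, v' j ^ 2 := by
  have hu : v' - v ∈ K ⊓ vanishingOn T :=
    ⟨K.sub_mem hv'K hvK, fun j hj => by simp [hagree j hj]⟩
  have hpyth : ‖v'‖ ^ 2 = ‖v‖ ^ 2 + ‖v' - v‖ ^ 2 := by
    conv_lhs => rw [← add_sub_cancel v v']
    rw [norm_add_sq_real, Submodule.inner_left_of_mem_orthogonal hu hv]
    ring
  have hT : ∑ j ∈ T, v' j ^ 2 = ∑ j ∈ T, v j ^ 2 :=
    Finset.sum_congr rfl fun j hj => by rw [hagree j hj]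
  rw [EuclideanSpace.norm_sq_eq_sum, EuclideanSpace.norm_sq_eq_sum, ← Finset.sum_add_sum_compl T,
    ← Finset.sum_add_sum_compl T (fun j => v j ^ 2), hT] at hpyth
  nlinarith [sq_nonneg ‖v' - v‖]

@[simp] lemma toEuclideanLin_diagonal_apply (s : ι → ℝ) (v : EuclideanSpace ℝ ι) (j : ι) :
    toEuclideanLin (diagonal s) v j = s j * v j := by
  simp [Matrix.toLpLin_apply, mulVec_diagonal]

lemma norm_sq_le_norm_toEuclideanLin_diagonal_sq (hs : ∀ k, 1 ≤ s k) (v : EuclideanSpace ℝ ι) :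
    ‖v‖ ^ 2 ≤ ‖toEuclideanLin (diagonal s) v‖ ^ 2 := by
  simp only [EuclideanSpace.norm_sq_eq_sum, toEuclideanLin_diagonal_apply]
  refine Finset.sum_le_sum fun k _ => ?_
  rw [mul_pow]
  exact le_mul_of_one_le_left (sq_nonneg _) (one_le_pow₀ (hs k))

lemma norm_toEuclideanLin_diagonal_sq_le {c : ℝ} (hs : ∀ k, 0 ≤ s k) (hc : ∀ k, s k ≤ c)
    (v : EuclideanSpace ℝ ι) : ‖toEuclideanLin (diagonal s) v‖ ^ 2 ≤ c ^ 2 * ‖v‖ ^ 2 := by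
  simp only [EuclideanSpace.norm_sq_eq_sum, toEuclideanLin_diagonal_apply, Finset.mul_sum]
  refine Finset.sum_le_sum fun k _ => ?_
  rw [mul_pow]
  exact mul_le_mul_of_nonneg_right (pow_le_pow_left₀ (hs k) (hc k) 2) (sq_nonneg _)

theorem leverage_map_diagonal_le (hs : ∀ k, 1 ≤ s k) {j : ι} (hj : s j = 1) :
    leverage (K.map (toEuclideanLin (diagonal s))) j ≤ leverage K j := by
  obtain ⟨v, hv, hpv⟩ := Submodule.mem_map.mp
    ((K.map (toEuclideanLin (diagonal s))).starProjection_apply_mem (EuclideanSpace.single j 1))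
  have hvj : v j = leverage (K.map (toEuclideanLin (diagonal s))) j := by
    rw [leverage_eq_apply, ← hpv, toEuclideanLin_diagonal_apply, hj, one_mul]
  have hv_norm : ‖v‖ ^ 2 ≤ leverage (K.map (toEuclideanLin (diagonal s))) j := by
    rw [leverage, ← hpv]
    exact norm_sq_le_norm_toEuclideanLin_diagonal_sq hs v
  have key := (sq_apply_le_leverage_mul hv j).trans
    (mul_le_mul_of_nonneg_left hv_norm (leverage_nonneg K j))
  rw [hvj] at key
  nlinarith [leverage_nonneg K j]

theorem leverage_le_leverage_map_diagonal (hs : ∀ k, 1 ≤ s k) {j : ι} (hmax : ∀ k, s k ≤ s j) :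
    leverage K j ≤ leverage (K.map (toEuclideanLin (diagonal s))) j := by
  set p := K.starProjection (EuclideanSpace.single j 1)
  have hp : toEuclideanLin (diagonal s) p ∈ K.map (toEuclideanLin (diagonal s)) :=
    Submodule.mem_map_of_mem (K.starProjection_apply_mem _)
  have hp_norm := norm_toEuclideanLin_diagonal_sq_le (fun k => zero_le_one.trans (hs k)) hmax p
  rw [← leverage] at hp_norm
  have key := (sq_apply_le_leverage_mul hp j).trans (mul_le_mul_of_nonneg_left hp_norm
    (leverage_nonneg (K.map (toEuclideanLin (diagonal s))) j))
  rw [toEuclideanLin_diagonal_apply, ← leverage_eq_apply, mul_pow, mul_left_comm] at key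
  have hsj : 0 < s j ^ 2 := pow_pos (zero_lt_one.trans_le (hs j)) 2
  have key' := le_of_mul_le_mul_left key hsj
  nlinarith [leverage_nonneg K j, leverage_nonneg (K.map (toEuclideanLin (diagonal s))) j]

lemma toEuclideanLin_diagonal_injective (hs : ∀ k, s k ≠ 0) :
    Function.Injective (toEuclideanLin (diagonal s)) := by
  intro v w h
  ext k
  have := congrArg (fun x : EuclideanSpace ℝ ι => x k) h
  simp only [toEuclideanLin_diagonal_apply] at this
  exact mul_left_cancel₀ (hs k) this

lemma map_diagonal_inf_vanishingOn (hs : ∀ k, s k ≠ 0) (T : Finset ι) :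
    K.map (toEuclideanLin (diagonal s)) ⊓ vanishingOn T
      = (K ⊓ vanishingOn T).map (toEuclideanLin (diagonal s)) := by
  ext x
  simp only [Submodule.mem_inf, Submodule.mem_map, mem_vanishingOn]
  constructor
  · rintro ⟨⟨v, hv, rfl⟩, hvT⟩
    refine ⟨v, ⟨hv, fun j hj => ?_⟩, rfl⟩
    simpa [hs j] using hvT j hj
  · rintro ⟨v, ⟨hv, hvT⟩, rfl⟩
    exact ⟨⟨v, hv, rfl⟩, fun j hj => by simp [hvT j hj]⟩

lemma finrank_map_diagonal (hs : ∀ k, s k ≠ 0) (K : Submodule ℝ (EuclideanSpace ℝ ι)) :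
    Module.finrank ℝ ↥(K.map (toEuclideanLin (diagonal s))) = Module.finrank ℝ K :=
  (Submodule.equivMapOfInjective _ (toEuclideanLin_diagonal_injective hs) K).finrank_eq.symm

theorem sum_abs_sub_leverage_map_diagonal_le {T : Finset ι} (hs : ∀ k, 1 ≤ s k)
    (hT : ∀ j ∈ T, s j = 1) (hTc : ∀ j ∉ T, ∀ k, s k ≤ s j) {δ : ℝ} (hδ : 0 ≤ δ)
    (h : ∀ v ∈ K.map (toEuclideanLin (diagonal s)) ⊓
        (K.map (toEuclideanLin (diagonal s)) ⊓ vanishingOn T)ᗮ,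
      ∑ j ∈ Tᶜ, v j ^ 2 ≤ δ * ‖v‖ ^ 2) :
    ∑ j, |leverage K j - leverage (K.map (toEuclideanLin (diagonal s))) j|
      ≤ 2 * δ * Module.finrank ℝ K := by
  set K' := K.map (toEuclideanLin (diagonal s))
  have hs0 : ∀ k, s k ≠ 0 := fun k => (zero_lt_one.trans_le (hs k)).ne'
  have htotal : ∑ j, leverage K j = ∑ j, leverage K' j := by
    rw [sum_leverage, sum_leverage, finrank_map_diagonal hs0]
  have hlow := finrank_inf_vanishingOn_le_sum_compl_leverage K T
  have hup := sum_compl_leverage_le hδ h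
  rw [map_diagonal_inf_vanishingOn hs0, finrank_map_diagonal hs0, finrank_map_diagonal hs0] at hup
  have habs_T : ∑ j ∈ T, |leverage K j - leverage K' j| = ∑ j ∈ T, (leverage K j - leverage K' j) :=
    Finset.sum_congr rfl fun j hj =>
      abs_of_nonneg (sub_nonneg.mpr (leverage_map_diagonal_le hs (hT j hj)))
  have habs_Tc : ∑ j ∈ Tᶜ, |leverage K j - leverage K' j|
      = ∑ j ∈ Tᶜ, (leverage K' j - leverage K j) :=
    Finset.sum_congr rfl fun j hj => by
      rw [abs_sub_comm]
      exact abs_of_nonneg (sub_nonneg.mpr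
        (leverage_le_leverage_map_diagonal hs (hTc j (Finset.mem_compl.mp hj))))
  rw [← Finset.sum_add_sum_compl T, habs_T, habs_Tc, Finset.sum_sub_distrib, Finset.sum_sub_distrib]
  rw [← Finset.sum_add_sum_compl T, ← Finset.sum_add_sum_compl T (leverage K')] at htotal
  linarith

end Euclidean

section Hat

variable {ι m : Type*} [Fintype ι] [DecidableEq ι] [Fintype m] [DecidableEq m]

theorem leverage_range_toEuclideanLin (A : Matrix ι m ℝ) (hA : IsUnit (Aᵀ * A).det) (j : ι) :
    leverage (LinearMap.range (toEuclideanLin A)) j = A j ⬝ᵥ ((Aᵀ * A)⁻¹ *ᵥ A j) := by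
  set c := (Aᵀ * A)⁻¹ *ᵥ A j
  have hAc : Aᵀ *ᵥ (A *ᵥ c) = A j := by
    rw [mulVec_mulVec, mulVec_mulVec, mul_nonsing_inv _ hA, one_mulVec]
  have hP : (LinearMap.range (toEuclideanLin A)).starProjection (EuclideanSpace.single j 1)
      = WithLp.toLp 2 (A *ᵥ c) := by
    refine Submodule.eq_starProjection_of_mem_of_inner_eq_zero ⟨WithLp.toLp 2 c, by
      simp [Matrix.toLpLin_apply]⟩ fun w hw => ?_
    obtain ⟨x, rfl⟩ := hw
    have hcross : (A *ᵥ x.ofLp) ⬝ᵥ (A *ᵥ c) = A j ⬝ᵥ x.ofLp := by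
      rw [← vecMul_transpose, ← dotProduct_mulVec, hAc, dotProduct_comm]
    rw [inner_sub_left, EuclideanSpace.inner_single_one_left, Matrix.toLpLin_apply,
      EuclideanSpace.inner_toLp_toLp, star_trivial, hcross]
    exact sub_eq_zero.mpr rfl
  rw [leverage_eq_apply, hP]
  rfl

end Hat

section RowSpace

variable {d n : ℕ}

lemma mulVec_transpose_injective_of_rank_eq {U : Matrix (Fin d) (Fin n) ℝ} (hU : U.rank = d) :
    Function.Injective Uᵀ.mulVec := by
  have hrank : Uᵀ.rank = d := by rw [rank_transpose, hU]
  have := LinearMap.finrank_range_add_finrank_ker Uᵀ.mulVecLin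
  rw [← Matrix.rank, hrank, Module.finrank_fin_fun] at this
  rw [← Matrix.coe_mulVecLin, ← LinearMap.ker_eq_bot, ← Submodule.finrank_eq_zero]
  omega

def weightedRowSpace (U : Matrix (Fin d) (Fin n) ℝ) (z : Fin n → ℝ) :
    Submodule ℝ (EuclideanSpace ℝ (Fin n)) :=
  LinearMap.range (toEuclideanLin (diagonal (fun j => √(z j)) * Uᵀ))

theorem lev_eq_leverage {U : Matrix (Fin d) (Fin n) ℝ} (hU : U.rank = d) {z : Fin n → ℝ}
    (hz : ∀ j, 0 < z j) (j : Fin n) : lev U z j = leverage (weightedRowSpace U z) j := by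
  set A := diagonal (fun j => √(z j)) * Uᵀ
  have hsqrt : ∀ j, √(z j) * √(z j) = z j := fun j => Real.mul_self_sqrt (hz j).le
  have hgram : Aᵀ * A = U * diagonal z * Uᵀ := by
    simp only [A, transpose_mul, diagonal_transpose, transpose_transpose, Matrix.mul_assoc,
      ← Matrix.mul_assoc (diagonal _), diagonal_mul_diagonal, hsqrt]
  have hinj : Function.Injective A.mulVec := by
    intro x y hxy
    simp only [A, ← mulVec_mulVec] at hxy
    refine mulVec_transpose_injective_of_rank_eq hU (funext fun k => ?_)
    have := congrFun hxy k
    simp only [mulVec_diagonal] at this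
    exact mul_left_cancel₀ (Real.sqrt_pos.mpr (hz k)).ne' this
  have hdet : IsUnit (Aᵀ * A).det := by
    have hpd := PosDef.conjTranspose_mul_self A hinj
    rw [conjTranspose_eq_transpose_of_trivial] at hpd
    exact isUnit_iff_ne_zero.mpr hpd.det_pos.ne'
  have hrow : A j = √(z j) • fun i => U i j := by
    ext i; simp [A, diagonal_mul]
  rw [weightedRowSpace, leverage_range_toEuclideanLin A hdet, hgram, hrow, mulVec_smul,
    dotProduct_smul, smul_dotProduct, smul_smul, hsqrt, lev, smul_eq_mul]

lemma finrank_weightedRowSpace_le (U : Matrix (Fin d) (Fin n) ℝ) (z : Fin n → ℝ) :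
    Module.finrank ℝ (weightedRowSpace U z) ≤ d :=
  (LinearMap.finrank_range_le _).trans_eq (finrank_euclideanSpace_fin)

lemma mem_weightedRowSpace {U : Matrix (Fin d) (Fin n) ℝ} {z : Fin n → ℝ}
    {v : EuclideanSpace ℝ (Fin n)} :
    v ∈ weightedRowSpace U z ↔
      ∃ w ∈ LinearMap.range Uᵀ.mulVecLin, ∀ j, v j = √(z j) * w j := by
  constructor
  · rintro ⟨x, rfl⟩
    refine ⟨Uᵀ *ᵥ x, ⟨x, rfl⟩, fun j => ?_⟩
    simp [Matrix.toLpLin_apply, mulVec_diagonal, mulVec_transpose]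
  · rintro ⟨_, ⟨x, rfl⟩, hv⟩
    refine ⟨WithLp.toLp 2 x, ?_⟩
    ext j
    simp [Matrix.toLpLin_apply, mulVec_diagonal, hv j, mulVec_transpose]

lemma weightedRowSpace_eq_map {U : Matrix (Fin d) (Fin n) ℝ} {z z' s : Fin n → ℝ}
    (h : ∀ j, √(z' j) = s j * √(z j)) :
    weightedRowSpace U z' = (weightedRowSpace U z).map (toEuclideanLin (diagonal s)) := by
  have hdiag : diagonal (fun j => √(z' j)) = diagonal s * diagonal (fun j => √(z j)) := by
    rw [diagonal_mul_diagonal]; simp only [h]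
  rw [weightedRowSpace, weightedRowSpace, ← LinearMap.range_comp, hdiag, Matrix.mul_assoc,
    Matrix.toLpLin_mul_same]

end RowSpace

section Rho

variable {d n : ℕ} {U : Matrix (Fin d) (Fin n) ℝ}

def liftCost (W : Submodule ℝ (Fin n → ℝ)) (T : Finset (Fin n)) (w₀ : Fin n → ℝ) : Set ℝ :=
  {s | ∃ w ∈ W, (∀ j ∈ T, w j = w₀ j) ∧ s = ∑ j ∈ Tᶜ, w j ^ 2}

lemma bddBelow_liftCost (W : Submodule ℝ (Fin n → ℝ)) (T : Finset (Fin n)) (w₀ : Fin n → ℝ) :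
    BddBelow (liftCost W T w₀) :=
  ⟨0, by rintro _ ⟨w, -, -, rfl⟩; positivity⟩

lemma bddAbove_rhoT_set (W : Submodule ℝ (Fin n → ℝ)) (T : Finset (Fin n)) :
    BddAbove {r : ℝ | ∃ w₀ ∈ W, (∃ j ∈ T, w₀ j ≠ 0) ∧
      r = sInf (liftCost W T w₀) / ∑ j ∈ T, w₀ j ^ 2} := by
  obtain ⟨C, hC⟩ := LinearMap.exists_lift_norm_le ((restrictTo T).comp W.subtype)
    ((restrictTo Tᶜ).comp W.subtype)
  refine ⟨C ^ 2, ?_⟩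
  rintro _ ⟨w₀, hw₀, ⟨j₀, hj₀, hne⟩, rfl⟩
  obtain ⟨y, hfy, hgy⟩ := hC ⟨w₀, hw₀⟩
  simp only [LinearMap.comp_apply, Submodule.subtype_apply] at hfy hgy
  have hagree : ∀ j ∈ T, (y : Fin n → ℝ) j = w₀ j := fun j hj => by
    simpa [restrictTo, hj] using congrArg (fun v : EuclideanSpace ℝ (Fin n) => v j) hfy
  have hq : 0 < ∑ j ∈ T, w₀ j ^ 2 :=
    Finset.sum_pos' (fun j _ => sq_nonneg _) ⟨j₀, hj₀, by positivity⟩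
  rw [div_le_iff₀ hq]
  calc sInf (liftCost W T w₀) ≤ ‖restrictTo Tᶜ (y : Fin n → ℝ)‖ ^ 2 := by
        rw [norm_restrictTo_sq]
        exact csInf_le (bddBelow_liftCost W T w₀) ⟨y, y.2, hagree, rfl⟩
    _ ≤ (C * ‖restrictTo T w₀‖) ^ 2 := pow_le_pow_left₀ (norm_nonneg _) hgy 2
    _ = C ^ 2 * ∑ j ∈ T, w₀ j ^ 2 := by rw [mul_pow, norm_restrictTo_sq]

lemma sInf_liftCost_le_rhoT_mul {W : Submodule ℝ (Fin n → ℝ)} {T : Finset (Fin n)}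
    {w₀ : Fin n → ℝ} (hw₀ : w₀ ∈ W) (hne : ∃ j ∈ T, w₀ j ≠ 0) :
    sInf (liftCost W T w₀) ≤ rhoT W T * ∑ j ∈ T, w₀ j ^ 2 := by
  obtain ⟨j₀, hj₀, hj₀ne⟩ := hne
  have hq : 0 < ∑ j ∈ T, w₀ j ^ 2 :=
    Finset.sum_pos' (fun j _ => sq_nonneg _) ⟨j₀, hj₀, by positivity⟩
  rw [← div_le_iff₀ hq]
  exact le_csSup (bddAbove_rhoT_set W T) ⟨w₀, hw₀, ⟨j₀, hj₀, hj₀ne⟩, rfl⟩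

lemma rhoT_le_rho (U : Matrix (Fin d) (Fin n) ℝ) (T : Finset (Fin n)) :
    rhoT (LinearMap.range Uᵀ.mulVecLin) T ≤ rho U :=
  le_ciSup (Set.finite_range _).bddAbove T

lemma sum_compl_sq_le_mul_sInf_liftCost {ζ : Fin n → ℝ} (hζ : ∀ j, 0 ≤ ζ j) {T : Finset (Fin n)}
    {t : ℝ} (ht : 0 ≤ t) (hlow : ∀ j ∉ T, ζ j ≤ t) {v : EuclideanSpace ℝ (Fin n)}
    (hv : v ∈ weightedRowSpace U ζ ⊓ (weightedRowSpace U ζ ⊓ vanishingOn T)ᗮ)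
    {w : Fin n → ℝ} (hw : w ∈ LinearMap.range Uᵀ.mulVecLin) (hvw : ∀ j, v j = √(ζ j) * w j) :
    ∑ j ∈ Tᶜ, v j ^ 2 ≤ t * sInf (liftCost (LinearMap.range Uᵀ.mulVecLin) T w) := by
  obtain ⟨hvV, hvperp⟩ := Submodule.mem_inf.mp hv
  have hcost : ∀ s ∈ liftCost (LinearMap.range Uᵀ.mulVecLin) T w,
      ∑ j ∈ Tᶜ, v j ^ 2 ≤ t * s := by
    rintro _ ⟨w', hw', hagree, rfl⟩
    have hv' : WithLp.toLp 2 (fun j => √(ζ j) * w' j) ∈ weightedRowSpace U ζ :=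
      mem_weightedRowSpace.mpr ⟨w', hw', fun j => rfl⟩
    calc ∑ j ∈ Tᶜ, v j ^ 2
        ≤ ∑ j ∈ Tᶜ, (√(ζ j) * w' j) ^ 2 :=
          sum_compl_sq_le_of_mem_orthogonal hvV hvperp hv' fun j hj => by
            simp [hvw, hagree j hj]
      _ ≤ ∑ j ∈ Tᶜ, t * w' j ^ 2 := Finset.sum_le_sum fun j hj => by
          rw [mul_pow, Real.sq_sqrt (hζ j)]
          exact mul_le_mul_of_nonneg_right (hlow j (Finset.mem_compl.mp hj)) (sq_nonneg _)
      _ = t * ∑ j ∈ Tᶜ, w' j ^ 2 := (Finset.mul_sum ..).symm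
  rw [← smul_eq_mul, ← Real.sInf_smul_of_nonneg ht]
  exact le_csInf (Set.Nonempty.smul_set ⟨_, w, hw, fun _ _ => rfl, rfl⟩)
    (by rintro _ ⟨s, hs, rfl⟩; exact hcost s hs)

theorem sum_compl_sq_le_of_rhoT {ζ : Fin n → ℝ} (hζ : ∀ j, 0 ≤ ζ j) {T : Finset (Fin n)}
    {t δ : ℝ} (ht : 0 ≤ t) (hlow : ∀ j ∉ T, ζ j ≤ t)
    (hhigh : ∀ k ∈ T, rhoT (LinearMap.range Uᵀ.mulVecLin) T * t ≤ δ * ζ k)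
    {v : EuclideanSpace ℝ (Fin n)}
    (hv : v ∈ weightedRowSpace U ζ ⊓ (weightedRowSpace U ζ ⊓ vanishingOn T)ᗮ) :
    ∑ j ∈ Tᶜ, v j ^ 2 ≤ δ * ∑ j ∈ T, v j ^ 2 := by
  set W := LinearMap.range Uᵀ.mulVecLin
  obtain ⟨hvV, hvperp⟩ := Submodule.mem_inf.mp hv
  obtain ⟨w, hw, hvw⟩ := mem_weightedRowSpace.mp hvV
  by_cases hne : ∃ j ∈ T, w j ≠ 0
  swap
  · push Not at hne
    have hv0 : v = 0 := by
      refine inner_self_eq_zero.mp (Submodule.inner_right_of_mem_orthogonal ?_ hvperp)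
      exact ⟨hvV, fun j hj => by rw [hvw, hne j hj, mul_zero]⟩
    simp [hv0]
  calc ∑ j ∈ Tᶜ, v j ^ 2
      ≤ t * (rhoT W T * ∑ j ∈ T, w j ^ 2) :=
        (sum_compl_sq_le_mul_sInf_liftCost hζ ht hlow hv hw hvw).trans
          (mul_le_mul_of_nonneg_left (sInf_liftCost_le_rhoT_mul hw hne) ht)
    _ = ∑ j ∈ T, rhoT W T * t * w j ^ 2 := by rw [Finset.mul_sum, Finset.mul_sum]; ring_nf
    _ ≤ ∑ j ∈ T, δ * ζ j * w j ^ 2 := Finset.sum_le_sum fun j hj =>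
        mul_le_mul_of_nonneg_right (hhigh j hj) (sq_nonneg _)
    _ = δ * ∑ j ∈ T, v j ^ 2 := by
        simp only [hvw, mul_pow, Real.sq_sqrt (hζ _), Finset.mul_sum, mul_assoc]

theorem sum_abs_sub_lev_scale_compl_le (hU : U.rank = d) {ζ : Fin n → ℝ} (hζ : ∀ j, 0 < ζ j)
    {T : Finset (Fin n)} {γ t δ : ℝ} (hγ : 1 ≤ γ) (hδ : 0 ≤ δ) (ht : 0 ≤ t)
    (hlow : ∀ j ∉ T, γ * ζ j ≤ t)
    (hhigh : ∀ k ∈ T, rhoT (LinearMap.range Uᵀ.mulVecLin) T * t ≤ δ * ζ k) :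
    ∑ j, |lev U ζ j - lev U (fun j => if j ∈ T then ζ j else γ * ζ j) j| ≤ 2 * d * δ := by
  set ζ' := fun j => if j ∈ T then ζ j else γ * ζ j
  set s : Fin n → ℝ := fun j => if j ∈ T then 1 else √γ
  have hγ0 : 0 ≤ γ := zero_le_one.trans hγ
  have hζ' : ∀ j, 0 < ζ' j := fun j => by
    by_cases hj : j ∈ T <;> simp [ζ', hj, hζ j, mul_pos (zero_lt_one.trans_le hγ) (hζ j)]
  have hs : ∀ k, 1 ≤ s k := fun k => by
    by_cases hk : k ∈ T <;> simp [s, hk, Real.one_le_sqrt.mpr hγ]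
  have hV : weightedRowSpace U ζ' = (weightedRowSpace U ζ).map (toEuclideanLin (diagonal s)) :=
    weightedRowSpace_eq_map fun j => by
      by_cases hj : j ∈ T <;> simp [ζ', s, hj, Real.sqrt_mul hγ0]
  simp_rw [lev_eq_leverage hU hζ, lev_eq_leverage hU hζ', hV]
  refine (sum_abs_sub_leverage_map_diagonal_le hs (fun j hj => if_pos hj)
    (fun j hj k => ?_) hδ fun v hv => ?_).trans ?_
  · by_cases hk : k ∈ T <;> simp [s, hj, hk, Real.one_le_sqrt.mpr hγ]
  · rw [← hV] at hv
    refine (sum_compl_sq_le_of_rhoT (fun j => (hζ' j).le) ht (fun j hj => ?_) (fun k hk => ?_)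
      hv).trans (mul_le_mul_of_nonneg_left ?_ hδ)
    · simpa [ζ', hj] using hlow j hj
    · simpa [ζ', hk] using hhigh k hk
    · rw [EuclideanSpace.norm_sq_eq_sum]
      exact Finset.sum_le_univ_sum_of_nonneg fun j => sq_nonneg _
  · rw [mul_right_comm]
    gcongr
    exact_mod_cast finrank_weightedRowSpace_le U ζ

end Rho

section Sequences

variable {n : ℕ}

def scaleUpTo (a : Fin n) (γ : ℝ) (f : Fin n → ℝ) : Fin n → ℝ :=
  fun c => if a < c then f c else γ * f c

def GapsLE (κ : ℝ) (f : Fin n → ℝ) (k : ℕ) : Prop :=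
  ∀ a b : Fin n, (b : ℕ) = a + 1 → (b : ℕ) ≤ k → f b ≤ κ * f a

lemma max_one_div_mul_eq {x y κ : ℝ} (hx : 0 < x) (hκ : 0 < κ) :
    max 1 (y / (κ * x)) * x = max x (y / κ) := by
  rw [max_mul_of_nonneg _ _ hx.le, one_mul]
  congr 1
  field_simp

variable {f : Fin n → ℝ} {a b : Fin n} {γ κ : ℝ}

@[simp] lemma scaleUpTo_one (a : Fin n) (f : Fin n → ℝ) : scaleUpTo a 1 f = f := by
  funext c; simp [scaleUpTo]

lemma scaleUpTo_pos (hγ : 0 < γ) (hf : ∀ c, 0 < f c) (c : Fin n) : 0 < scaleUpTo a γ f c := by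
  unfold scaleUpTo
  split_ifs
  exacts [hf c, mul_pos hγ (hf c)]

lemma monotone_scaleUpTo (hf : Monotone f) (hab : (b : ℕ) = a + 1) (hγ : 0 ≤ γ)
    (hγb : γ * f a ≤ f b) : Monotone (scaleUpTo a γ f) := by
  intro c c' hcc'
  by_cases hc : a < c
  · simp only [scaleUpTo, hc, hc.trans_le hcc', if_true]
    exact hf hcc'
  by_cases hc' : a < c'
  · simp only [scaleUpTo, hc, hc', if_true, if_false]
    calc γ * f c ≤ γ * f a := mul_le_mul_of_nonneg_left (hf (not_lt.mp hc)) hγ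
      _ ≤ f b := hγb
      _ ≤ f c' := hf (by rw [Fin.lt_def] at hc'; rw [Fin.le_def]; omega)
  simp only [scaleUpTo, hc, hc', if_false]
  exact mul_le_mul_of_nonneg_left (hf hcc') hγ

lemma GapsLE.scaleUpTo (hf : GapsLE κ f a) (hab : (b : ℕ) = a + 1) (hγ : 0 ≤ γ)
    (hγa : f b ≤ κ * (γ * f a)) : GapsLE κ (scaleUpTo a γ f) b := by
  intro a' b' hab' hb'
  rcases (show (b' : ℕ) = b ∨ (b' : ℕ) ≤ a by omega) with h | h
  · obtain rfl : b' = b := Fin.ext h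
    obtain rfl : a' = a := Fin.ext (by omega)
    simpa [_root_.scaleUpTo, Fin.lt_def, hab] using hγa
  · have hb'a : ¬ a < b' := by rw [Fin.lt_def]; omega
    have ha'a : ¬ a < a' := by rw [Fin.lt_def]; omega
    simp only [_root_.scaleUpTo, hb'a, ha'a, if_false]
    rw [mul_left_comm]
    exact mul_le_mul_of_nonneg_left (hf a' b' hab' h) hγ

lemma GapsLE.succ_of_le {k : ℕ} (hf : GapsLE κ f k) (hk : n ≤ k + 1) : GapsLE κ f (k + 1) :=
  fun a b hab _ => hf a b hab (by omega)

theorem le_pow_mul_of_gapsLE (hκ : 1 ≤ κ) (hf : Monotone f) (hpos : ∀ c, 0 ≤ f c)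
    (hgaps : GapsLE κ f n) (a b : Fin n) : f b ≤ κ ^ n * f a := by
  have h0 : 0 < n := a.pos
  have hchain : ∀ i (hi : i < n), f ⟨i, hi⟩ ≤ κ ^ i * f ⟨0, h0⟩ := by
    intro i
    induction i with
    | zero => intro _; simp
    | succ i ih =>
      intro hi
      calc f ⟨i + 1, hi⟩ ≤ κ * f ⟨i, by omega⟩ := hgaps _ _ rfl hi.le
        _ ≤ κ * (κ ^ i * f ⟨0, h0⟩) := mul_le_mul_of_nonneg_left (ih _) (by linarith)
        _ = κ ^ (i + 1) * f ⟨0, h0⟩ := by ring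
  calc f b ≤ κ ^ (b : ℕ) * f ⟨0, h0⟩ := hchain b b.2
    _ ≤ κ ^ n * f ⟨0, h0⟩ := mul_le_mul_of_nonneg_right (pow_le_pow_right₀ hκ b.2.le) (hpos _)
    _ ≤ κ ^ n * f a :=
      mul_le_mul_of_nonneg_left (hf (Fin.le_def.mpr (Nat.zero_le _))) (pow_nonneg (by linarith) _)

end Sequences

section Driver

variable {d n : ℕ} {U : Matrix (Fin d) (Fin n) ℝ} {κ δ : ℝ}

/-- The factor `max 1 (f b / (κ * f a))` brings the ratio `f b / f a` down to `κ` if it exceeded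
`κ`, and is `1` otherwise. -/
theorem sum_abs_sub_lev_scaleUpTo_le (hU : U.rank = d) (hκ : 1 ≤ κ) (hδ : 0 ≤ δ)
    (hρ : ∀ T, rhoT (LinearMap.range Uᵀ.mulVecLin) T ≤ κ * δ) (σ : Equiv.Perm (Fin n))
    {f : Fin n → ℝ} (hpos : ∀ c, 0 < f c) (hmono : Monotone f) {a b : Fin n}
    (hab : (b : ℕ) = a + 1) :
    ∑ j, |lev U (f ∘ σ.symm) j - lev U (scaleUpTo a (max 1 (f b / (κ * f a))) f ∘ σ.symm) j|
      ≤ 2 * d * δ := by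
  rcases le_or_gt (f b / (κ * f a)) 1 with hgood | hbad
  · simp only [max_eq_left hgood, scaleUpTo_one, sub_self, abs_zero, Finset.sum_const_zero]
    positivity
  set γ := f b / (κ * f a)
  have hκ0 : 0 < κ := zero_lt_one.trans_le hκ
  have hγa : γ * f a = f b / κ := by
    simp only [γ]
    field_simp [(hpos a).ne']
  have ht : 0 ≤ f b / κ := div_nonneg (hpos b).le hκ0.le
  set T := Finset.univ.filter fun j => a < σ.symm j
  have hform : scaleUpTo a (max 1 γ) f ∘ σ.symm
      = fun j => if j ∈ T then (f ∘ σ.symm) j else γ * (f ∘ σ.symm) j := by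
    funext j; simp [scaleUpTo, T, max_eq_right hbad.le]
  rw [hform]
  refine sum_abs_sub_lev_scale_compl_le hU (fun j => hpos _) hbad.le hδ ht
    (fun j hj => ?_) (fun k hk => ?_)
  · have hja : σ.symm j ≤ a := not_lt.mp (by simpa [T] using hj)
    rw [← hγa]
    exact mul_le_mul_of_nonneg_left (hmono hja) (zero_lt_one.trans hbad).le
  · have hbk : b ≤ σ.symm k := by
      have : a < σ.symm k := by simpa [T] using hk
      rw [Fin.lt_def] at this; rw [Fin.le_def]; omega
    calc rhoT _ T * (f b / κ) ≤ κ * δ * (f b / κ) :=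
          mul_le_mul_of_nonneg_right (hρ T) ht
      _ = δ * f b := by field_simp
      _ ≤ δ * (f ∘ σ.symm) k := mul_le_mul_of_nonneg_left (hmono hbk) hδ

theorem exists_gapsLE_sum_abs_sub_lev_le (hU : U.rank = d) (hκ : 1 ≤ κ) (hδ : 0 ≤ δ)
    (hρ : ∀ T, rhoT (LinearMap.range Uᵀ.mulVecLin) T ≤ κ * δ) (σ : Equiv.Perm (Fin n))
    {f₀ : Fin n → ℝ} (hpos₀ : ∀ c, 0 < f₀ c) (hmono₀ : Monotone f₀) (k : ℕ) :
    ∃ f : Fin n → ℝ, (∀ c, 0 < f c) ∧ Monotone f ∧ GapsLE κ f k ∧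
      ∑ j, |lev U (f₀ ∘ σ.symm) j - lev U (f ∘ σ.symm) j| ≤ 2 * k * d * δ := by
  induction k with
  | zero => exact ⟨f₀, hpos₀, hmono₀, fun a b hab hb => by omega, by simp⟩
  | succ k ih =>
    obtain ⟨f, hpos, hmono, hgaps, hdist⟩ := ih
    by_cases hk : k + 1 < n
    swap
    · refine ⟨f, hpos, hmono, hgaps.succ_of_le (by omega), hdist.trans ?_⟩
      gcongr
      simp
    set a : Fin n := ⟨k, by omega⟩
    set b : Fin n := ⟨k + 1, hk⟩
    have hab : (b : ℕ) = a + 1 := rfl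
    set γ := max 1 (f b / (κ * f a))
    have hκ0 : 0 < κ := zero_lt_one.trans_le hκ
    have hγ0 : 0 < γ := zero_lt_one.trans_le (le_max_left _ _)
    have hγ : γ * f a = max (f a) (f b / κ) := max_one_div_mul_eq (hpos a) hκ0
    have hγa : f b ≤ κ * (γ * f a) := by
      rw [hγ, ← div_le_iff₀' hκ0]
      exact le_max_right _ _
    have hγb : γ * f a ≤ f b := by
      rw [hγ]
      exact max_le (hmono (Fin.le_def.mpr (by omega))) (div_le_self (hpos b).le hκ)
    refine ⟨scaleUpTo a γ f, scaleUpTo_pos hγ0 hpos, monotone_scaleUpTo hmono hab hγ0.le hγb,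
      GapsLE.scaleUpTo hgaps hab hγ0.le hγa, ?_⟩
    calc ∑ j, |lev U (f₀ ∘ σ.symm) j - lev U (scaleUpTo a γ f ∘ σ.symm) j|
        ≤ ∑ j, (|lev U (f₀ ∘ σ.symm) j - lev U (f ∘ σ.symm) j|
            + |lev U (f ∘ σ.symm) j - lev U (scaleUpTo a γ f ∘ σ.symm) j|) :=
          Finset.sum_le_sum fun j _ => abs_sub_le _ _ _
      _ ≤ 2 * k * d * δ + 2 * d * δ := by
          rw [Finset.sum_add_distrib]
          exact add_le_add hdist (sum_abs_sub_lev_scaleUpTo_le hU hκ hδ hρ σ hpos hmono hab)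
      _ = 2 * ↑(k + 1) * d * δ := by push_cast; ring

end Driver

end

/-- Regularization: any scaling can be replaced by one of bounded multiplicative range
`(max{ρ(U),1}/δ)^n` while changing the leverage scores by at most `2ndδ` in `ℓ¹`. -/
theorem regularization {d n : ℕ} (U : Matrix (Fin d) (Fin n) ℝ) (hU : U.rank = d)
    (z : Fin n → ℝ) (hz : ∀ j, 0 < z j) (δ : ℝ) (hδ0 : 0 < δ) (hδ1 : δ ≤ 1) :
    ∃ zhat : Fin n → ℝ, (∀ j, 0 < zhat j) ∧
      (∑ j, |lev U z j - lev U zhat j|) ≤ 2 * n * d * δ ∧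
      (∀ j k, zhat j / zhat k ≤ (max (rho U) 1 / δ) ^ n) := by
  set κ := max (rho U) 1 / δ
  have hκ : 1 ≤ κ := (one_le_div hδ0).mpr (hδ1.trans (le_max_right _ _))
  have hρ : ∀ T, rhoT (LinearMap.range Uᵀ.mulVecLin) T ≤ κ * δ := fun T => by
    rw [div_mul_cancel₀ _ hδ0.ne']
    exact (rhoT_le_rho U T).trans (le_max_left _ _)
  set σ := Tuple.sort z
  obtain ⟨f, hpos, hmono, hgaps, hdist⟩ := exists_gapsLE_sum_abs_sub_lev_le hU hκ hδ0.le hρ σ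
    (f₀ := z ∘ σ) (fun j => hz _) (Tuple.monotone_sort z) n
  rw [Function.comp_assoc, Equiv.self_comp_symm, Function.comp_id] at hdist
  refine ⟨f ∘ σ.symm, fun j => hpos _, hdist, fun j k => ?_⟩
  rw [Function.comp_apply, Function.comp_apply, div_le_iff₀ (hpos _)]
  exact le_pow_mul_of_gapsLE hκ hmono (fun c => (hpos c).le) hgaps _ _
end
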